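/- arXiv:2404.14517 — 3 statements merged into one kernel-verified Lean document; each statement's English description precedes it below -/
import Mathlib

section
/- Let k ≥ 1 and let τ, τ' ∈ Types_k be such that τ ⪯ τ'. Then for every finite word w with tp_k(w) = τ, there exists a finite word w' such that tp_k(w·w') = τ'. -/
set_option maxHeartbeats 1000000

namespace PrefSynth

/-! ### Possibly infinite words -/

/-- A (finite or infinite) word over alphabet `A`: positions carrying `some` letter. -/
abbrev Word (A : Type) : Type := ℕ → Option A

/-- `m` is a position of the word `w`. -/
def Word.pos {A : Type} (w : Word A) (m : ℕ) : Prop := w m ≠ none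

/-- A genuine word: its domain is downward closed. -/
def Word.Closed {A : Type} (w : Word A) : Prop :=
  ∀ i j : ℕ, i ≤ j → w j ≠ none → w i ≠ none

/-- The finite word given by a list. -/
def Word.ofList {A : Type} (l : List A) : Word A := fun i => l[i]?

/-- The infinite word given by a function. -/
def Word.ofFun {A : Type} (u : ℕ → A) : Word A := fun i => some (u i)

/-- The prefix of a word consisting of its first `n` positions; `Word.take w (m+1)`
is `w[0…m]`. -/
def Word.take {A : Type} (w : Word A) (n : ℕ) : Word A :=
  fun i => if i < n then w i else none

/-- `u` is a prefix of `v`. -/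
def Word.IsPrefix {A : Type} (u v : Word A) : Prop :=
  ∀ i, u i ≠ none → v i = u i

/-! ### Prefix first-order logic on words

Formulas in context `n`: the free variables are `Fin n`; when `n ≥ 1`, the variable
`0` is the bounding variable `x̄`, all other variables are prefix variables, and
every quantifier is of the form `∃ x < x̄` (new variables are appended at the end,
i.e. interpreted through `Fin.snoc`). -/

inductive PFm (A : Type) : ℕ → Type where
  | eq {n} : Fin n → Fin n → PFm A n
  | lt {n} : Fin n → Fin n → PFm A n
  | letter {n} : A → Fin n → PFm A n
  | and {n} : PFm A n → PFm A n → PFm A n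
  | not {n} : PFm A n → PFm A n
  | exlt {n} : PFm A (n + 2) → PFm A (n + 1)

/-- Quantifier depth. -/
def PFm.depth {A : Type} : {n : ℕ} → PFm A n → ℕ
  | _, .eq _ _ => 0
  | _, .lt _ _ => 0
  | _, .letter _ _ => 0
  | _, .and φ ψ => max φ.depth ψ.depth
  | _, .not φ => φ.depth
  | _, .exlt φ => φ.depth + 1

/-- Satisfaction of a prefFO formula in a word, under an assignment of the
free variables to positions. -/
def PFm.Sat {A : Type} (w : Word A) : {n : ℕ} → PFm A n → (Fin n → ℕ) → Prop
  | _, .eq i j, ρ => ρ i = ρ j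
  | _, .lt i j, ρ => ρ i < ρ j
  | _, .letter a i, ρ => w (ρ i) = some a
  | _, .and φ ψ, ρ => PFm.Sat w φ ρ ∧ PFm.Sat w ψ ρ
  | _, .not φ, ρ => ¬ PFm.Sat w φ ρ
  | _, .exlt φ, ρ => ∃ m : ℕ, Word.pos w m ∧ m < ρ 0 ∧ PFm.Sat w φ (Fin.snoc ρ m)

/-- prefFO sentences: start by quantifying the bounding variable, and are closed
under boolean combinations. -/
inductive PSen (A : Type) : Type where
  | exB : PFm A 1 → PSen A
  | and : PSen A → PSen A → PSen A
  | not : PSen A → PSen A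

/-- Quantifier depth of a sentence. -/
def PSen.depth {A : Type} : PSen A → ℕ
  | .exB φ => φ.depth + 1
  | .and s t => max s.depth t.depth
  | .not s => s.depth

/-- Satisfaction of a prefFO sentence in a word. -/
def PSen.Sat {A : Type} (w : Word A) : PSen A → Prop
  | .exB φ => ∃ m : ℕ, Word.pos w m ∧ PFm.Sat w φ (fun _ => m)
  | .and s t => PSen.Sat w s ∧ PSen.Sat w t
  | .not s => ¬ PSen.Sat w s

/-- The prefFO `k`-type of a word: the set of prefFO sentences of quantifier
depth at most `k` it satisfies. -/
def tp {A : Type} (k : ℕ) (w : Word A) : Set (PSen A) :=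
  {s | PSen.depth s ≤ k ∧ PSen.Sat w s}

/-- `Types_k`: the set of prefFO `k`-types of finite words over `A`. -/
def WTypes (A : Type) (k : ℕ) : Set (Set (PSen A)) :=
  {T | ∃ l : List A, T = tp k (Word.ofList l)}

/-- The relation `⪯` on types: `τ ⪯ τ'` iff some finite word of type `τ` has an
extension of type `τ'`. -/
def typeLe {A : Type} (k : ℕ) (τ τ' : Set (PSen A)) : Prop :=
  ∃ u v : List A, tp k (Word.ofList u) = τ ∧ tp k (Word.ofList (u ++ v)) = τ'

/-- Two words agree on all prefFO sentences of quantifier depth at most `k`. -/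
def prefEquiv {A : Type} (k : ℕ) (w w' : Word A) : Prop :=
  ∀ s : PSen A, PSen.depth s ≤ k → (PSen.Sat w s ↔ PSen.Sat w' s)

/-! ### Full first-order logic on words -/

inductive FOFm (A : Type) : ℕ → Type where
  | eq {n} : Fin n → Fin n → FOFm A n
  | lt {n} : Fin n → Fin n → FOFm A n
  | letter {n} : A → Fin n → FOFm A n
  | and {n} : FOFm A n → FOFm A n → FOFm A n
  | not {n} : FOFm A n → FOFm A n
  | ex {n} : FOFm A (n + 1) → FOFm A n

def FOFm.depth {A : Type} : {n : ℕ} → FOFm A n → ℕ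
  | _, .eq _ _ => 0
  | _, .lt _ _ => 0
  | _, .letter _ _ => 0
  | _, .and φ ψ => max φ.depth ψ.depth
  | _, .not φ => φ.depth
  | _, .ex φ => φ.depth + 1

def FOFm.Sat {A : Type} (w : Word A) : {n : ℕ} → FOFm A n → (Fin n → ℕ) → Prop
  | _, .eq i j, ρ => ρ i = ρ j
  | _, .lt i j, ρ => ρ i < ρ j
  | _, .letter a i, ρ => w (ρ i) = some a
  | _, .and φ ψ, ρ => FOFm.Sat w φ ρ ∧ FOFm.Sat w ψ ρ
  | _, .not φ, ρ => ¬ FOFm.Sat w φ ρ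
  | _, .ex φ, ρ => ∃ m : ℕ, Word.pos w m ∧ FOFm.Sat w φ (Fin.snoc ρ m)

/-- Two words agree on all FO sentences of quantifier depth at most `k`. -/
def foEquiv {A : Type} (k : ℕ) (w w' : Word A) : Prop :=
  ∀ s : FOFm A 0, FOFm.depth s ≤ k →
    (FOFm.Sat w s Fin.elim0 ↔ FOFm.Sat w' s Fin.elim0)

/-! ### The prefix Ehrenfeucht–Fraïssé game on words

After the first (bounding) round, pebbles are kept as matched pairs of
positions: `(m, m')` with `m` in the first word and `m'` in the second. -/

/-- The agreement condition: the correspondence between pebbled positions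
preserves equality, the order `<` and the letters. -/
def AgreeW {A : Type} (u v : Word A) (L : List (ℕ × ℕ)) : Prop :=
  ∀ p ∈ L, ∀ q ∈ L,
    ((p.1 = q.1) ↔ (p.2 = q.2)) ∧ ((p.1 < q.1) ↔ (p.2 < q.2)) ∧
    (∀ a : A, u p.1 = some a ↔ v p.2 = some a)

/-- `DupWinW u v b b' r L`: with bounding pebbles placed on `b` (in `u`) and `b'`
(in `v`), and prefix pebbles `L` already placed, Duplicator wins the game with `r`
remaining rounds. -/
def DupWinW {A : Type} (u v : Word A) (b b' : ℕ) : ℕ → List (ℕ × ℕ) → Prop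
  | 0, L => AgreeW u v ((b, b') :: L)
  | r + 1, L => AgreeW u v ((b, b') :: L) ∧
      (∀ m, Word.pos u m → m < b →
        ∃ m', Word.pos v m' ∧ m' < b' ∧ DupWinW u v b b' r ((m, m') :: L)) ∧
      (∀ m', Word.pos v m' → m' < b' →
        ∃ m, Word.pos u m ∧ m < b ∧ DupWinW u v b b' r ((m, m') :: L))

/-! ### Data words -/

/-- A move of a data word: a System action together with a System process, or an
Environment action together with an Environment process. `A`, `B` are the System
and Environment alphabets; `P`, `Q` the System and Environment process sets. -/
abbrev DMove (A B P Q : Type) : Type := (A × P) ⊕ (B × Q)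

/-- The process of a move. -/
def dproc {A B P Q : Type} : DMove A B P Q → P ⊕ Q :=
  Sum.elim (fun ap => Sum.inl ap.2) (fun bq => Sum.inr bq.2)

/-- The action of a move. -/
def dact {A B P Q : Type} : DMove A B P Q → A ⊕ B :=
  Sum.elim (fun ap => Sum.inl ap.1) (fun bq => Sum.inr bq.1)

/-- The process acting at position `m` of a data word. -/
def procAt {A B P Q : Type} (d : Word (DMove A B P Q)) (m : ℕ) : Option (P ⊕ Q) :=
  (d m).map dproc

/-- The action taken at position `m` of a data word. -/
def actAt {A B P Q : Type} (d : Word (DMove A B P Q)) (m : ℕ) : Option (A ⊕ B) :=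
  (d m).map dact

/-- Elements of the structure associated with a data word: one process element
for every process, and one element for every position. -/
abbrev Elem (P Q : Type) : Type := (P ⊕ Q) ⊕ ℕ

/-- The `∼`-class (i.e. the process) of an element of a data word. -/
def classOfE {A B P Q : Type} (d : Word (DMove A B P Q)) : Elem P Q → Option (P ⊕ Q)
  | .inl q => some q
  | .inr m => procAt d m

/-! ### Prefix first-order logic on data words

`PDW A B p b x` : formulas in a context with `p` process variables, `b` bounding
variables and `x` prefix variables.  Sentences (possibly with constants, constants
being modelled as the initial free variables) are obtained by instantiating the
contexts. -/

/-- A variable of any of the three kinds. -/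
abbrev DVar (p b x : ℕ) : Type := Fin p ⊕ (Fin b ⊕ Fin x)

inductive PDW (A B : Type) : ℕ → ℕ → ℕ → Type where
  | eq {p b x} : DVar p b x → DVar p b x → PDW A B p b x
  | procS {p b x} : Fin p → PDW A B p b x
  | procE {p b x} : Fin p → PDW A B p b x
  | letter {p b x} : (A ⊕ B) → (Fin b ⊕ Fin x) → PDW A B p b x
  | lesim {p b x} : Fin x → Fin x → PDW A B p b x
  | sim {p b x} : Fin p → DVar p b x → PDW A B p b x
  | and {p b x} : PDW A B p b x → PDW A B p b x → PDW A B p b x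
  | not {p b x} : PDW A B p b x → PDW A B p b x
  | exP {p b x} : PDW A B (p + 1) b x → PDW A B p b x
  | exB {p b x} : PDW A B p (b + 1) x → PDW A B p b x
  | exX {p b x} : Fin b → PDW A B p b (x + 1) → PDW A B p b x

/-- Quantifier depth. -/
def PDW.depth {A B : Type} : {p b x : ℕ} → PDW A B p b x → ℕ
  | _, _, _, .eq _ _ => 0
  | _, _, _, .procS _ => 0
  | _, _, _, .procE _ => 0
  | _, _, _, .letter _ _ => 0
  | _, _, _, .lesim _ _ => 0
  | _, _, _, .sim _ _ => 0
  | _, _, _, .and φ ψ => max φ.depth ψ.depth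
  | _, _, _, .not φ => φ.depth
  | _, _, _, .exP φ => φ.depth + 1
  | _, _, _, .exB φ => φ.depth + 1
  | _, _, _, .exX _ φ => φ.depth + 1

/-- Interpretation of a variable as an element of the data-word structure. -/
def interpDVar {P Q : Type} {p b x : ℕ} (ρP : Fin p → P ⊕ Q) (ρB : Fin b → ℕ)
    (ρX : Fin x → ℕ) : DVar p b x → Elem P Q
  | .inl i => Sum.inl (ρP i)
  | .inr (.inl i) => Sum.inr (ρB i)
  | .inr (.inr i) => Sum.inr (ρX i)

/-- Satisfaction of a prefFO^dw formula in a data word, under assignments of the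
process, bounding and prefix variables.  New bounding variables must be positions
lying in a fresh class (w.r.t. all present bounding variables), new prefix
variables must be `≲` their associated bounding variable. -/
def PDW.Sat {A B P Q : Type} (d : Word (DMove A B P Q)) :
    {p b x : ℕ} → PDW A B p b x → (Fin p → P ⊕ Q) → (Fin b → ℕ) → (Fin x → ℕ) → Prop
  | _, _, _, .eq v w, ρP, ρB, ρX => interpDVar ρP ρB ρX v = interpDVar ρP ρB ρX w
  | _, _, _, .procS i, ρP, _, _ => ∃ q : P, ρP i = Sum.inl q
  | _, _, _, .procE i, ρP, _, _ => ∃ q : Q, ρP i = Sum.inr q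
  | _, _, _, .letter a v, _, ρB, ρX => actAt d (Sum.elim ρB ρX v) = some a
  | _, _, _, .lesim i j, _, _, ρX =>
      ρX i < ρX j ∧ ∃ q, procAt d (ρX i) = some q ∧ procAt d (ρX j) = some q
  | _, _, _, .sim i v, ρP, ρB, ρX => classOfE d (interpDVar ρP ρB ρX v) = some (ρP i)
  | _, _, _, .and φ ψ, ρP, ρB, ρX => PDW.Sat d φ ρP ρB ρX ∧ PDW.Sat d ψ ρP ρB ρX
  | _, _, _, .not φ, ρP, ρB, ρX => ¬ PDW.Sat d φ ρP ρB ρX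
  | _, _, _, .exP φ, ρP, ρB, ρX => ∃ q : P ⊕ Q, PDW.Sat d φ (Fin.snoc ρP q) ρB ρX
  | _, _, _, .exB φ, ρP, ρB, ρX => ∃ m : ℕ, d m ≠ none ∧
      (∀ j, procAt d m ≠ procAt d (ρB j)) ∧ PDW.Sat d φ ρP (Fin.snoc ρB m) ρX
  | _, _, _, .exX y φ, ρP, ρB, ρX => ∃ m : ℕ, d m ≠ none ∧ m < ρB y ∧
      procAt d m = procAt d (ρB y) ∧ PDW.Sat d φ ρP ρB (Fin.snoc ρX m)

/-- Satisfaction of a prefFO^dw sentence (no constants) in a data word. -/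
def SatS {A B P Q : Type} (d : Word (DMove A B P Q)) (φ : PDW A B 0 0 0) : Prop :=
  PDW.Sat d φ Fin.elim0 Fin.elim0 Fin.elim0

/-! ### Classes of a data word -/

/-- `m` is a position of process `q` in the data word `d`. -/
def isPosOf {A B P Q : Type} (d : Word (DMove A B P Q)) (q : P ⊕ Q) (m : ℕ) : Prop :=
  procAt d m = some q

open Classical in
/-- The class of process `q` in the data word `d`, as a (finite or infinite) word
over `A ⊕ B`: its `i`-th letter is the action taken at the `i`-th position of `q`. -/
noncomputable def classWord {A B P Q : Type} (d : Word (DMove A B P Q)) (q : P ⊕ Q) :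
    Word (A ⊕ B) :=
  fun i =>
    if {m | isPosOf d q m}.Infinite ∨ i < Set.ncard {m | isPosOf d q m}
    then actAt d (Nat.nth (isPosOf d q) i) else none

/-- The set of processes of `d` whose class has prefFO `k`-type `τ`. -/
def classesOfType {A B P Q : Type} (d : Word (DMove A B P Q)) (k : ℕ)
    (τ : Set (PSen (A ⊕ B))) : Set (P ⊕ Q) :=
  {q | tp k (classWord d q) = τ}

end PrefSynth
/-! ### The prefix Ehrenfeucht–Fraïssé game on data words (with constants) -/

namespace PrefSynth

/-- A pebble placed on a data word: a process pebble, a bounding pebble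
or a prefix pebble. -/
inductive Peb (P Q : Type) : Type where
  | proc : P ⊕ Q → Peb P Q
  | bound : ℕ → Peb P Q
  | pref : ℕ → Peb P Q

/-- The element on which a pebble is placed. -/
def Peb.elem {P Q : Type} : Peb P Q → Elem P Q
  | .proc q => Sum.inl q
  | .bound m => Sum.inr m
  | .pref m => Sum.inr m

/-- `e` is a System process element. -/
def IsProcSE {P Q : Type} (e : Elem P Q) : Prop := ∃ q : P, e = Sum.inl (Sum.inl q)

/-- `e` is an Environment process element. -/
def IsProcEE {P Q : Type} (e : Elem P Q) : Prop := ∃ q : Q, e = Sum.inl (Sum.inr q)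

/-- `e` is a position labelled by the letter `a`. -/
def LetterIsE {A B P Q : Type} (d : Word (DMove A B P Q)) (e : Elem P Q) (a : A ⊕ B) :
    Prop := ∃ m : ℕ, e = Sum.inr m ∧ actAt d m = some a

/-- `e ∼ f` in the data word `d`. -/
def SimE {A B P Q : Type} (d : Word (DMove A B P Q)) (e f : Elem P Q) : Prop :=
  ∃ q, classOfE d e = some q ∧ classOfE d f = some q

/-- `e ≲ f` in the data word `d`. -/
def LesimE {A B P Q : Type} (d : Word (DMove A B P Q)) (e f : Elem P Q) : Prop :=
  ∃ m m' : ℕ, e = Sum.inr m ∧ f = Sum.inr m' ∧ m < m' ∧ SimE d e f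

/-- Agreement of a correspondence between elements of two data words: it must
preserve equality, `Proc_S`, `Proc_E`, the letters, `≲` and `∼`. -/
def AgreeDW {A B P Q P' Q' : Type} (d : Word (DMove A B P Q))
    (d' : Word (DMove A B P' Q')) (E : List (Elem P Q × Elem P' Q')) : Prop :=
  ∀ e ∈ E, ∀ f ∈ E,
    ((e.1 = f.1) ↔ (e.2 = f.2)) ∧
    (IsProcSE e.1 ↔ IsProcSE e.2) ∧
    (IsProcEE e.1 ↔ IsProcEE e.2) ∧
    (∀ a : A ⊕ B, LetterIsE d e.1 a ↔ LetterIsE d' e.2 a) ∧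
    (LesimE d e.1 f.1 ↔ LesimE d' e.2 f.2) ∧
    (SimE d e.1 f.1 ↔ SimE d' e.2 f.2)

/-- A legal bounding move: a position whose class contains no previously placed
bounding pebble (from `l`) and no bounding constant (from `B0`). -/
def LegalBound {A B P Q : Type} (d : Word (DMove A B P Q)) (B0 : List ℕ)
    (l : List (Peb P Q)) (m : ℕ) : Prop :=
  d m ≠ none ∧ (∀ m₀ : ℕ, Peb.bound m₀ ∈ l → procAt d m ≠ procAt d m₀) ∧
    (∀ m₀ ∈ B0, procAt d m ≠ procAt d m₀)

/-- A legal prefix move: a position such that some previously placed bounding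
pebble or bounding constant lies in the same class, at a later position. -/
def LegalPref {A B P Q : Type} (d : Word (DMove A B P Q)) (B0 : List ℕ)
    (l : List (Peb P Q)) (m : ℕ) : Prop :=
  d m ≠ none ∧
    ∃ m₀ : ℕ, (Peb.bound m₀ ∈ l ∨ m₀ ∈ B0) ∧ m < m₀ ∧ procAt d m = procAt d m₀

/-- The matched pairs of elements determined by the constants `E0` and the
pebbles `L`. -/
def pairElems {P Q P' Q' : Type} (E0 : List (Elem P Q × Elem P' Q'))
    (L : List (Peb P Q × Peb P' Q')) : List (Elem P Q × Elem P' Q') :=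
  E0 ++ L.map (fun pq => (pq.1.elem, pq.2.elem))

/-- `DupWinDW d d' E0 B0 B0' r L`: Duplicator wins the `r`-round prefix EF game on
the data words `d` and `d'` with matched constant elements `E0` (the bounding
constants being interpreted by `B0` in `d` and by `B0'` in `d'`) and already
placed matched pebbles `L`. -/
def DupWinDW {A B P Q P' Q' : Type} (d : Word (DMove A B P Q))
    (d' : Word (DMove A B P' Q')) (E0 : List (Elem P Q × Elem P' Q'))
    (B0 B0' : List ℕ) : ℕ → List (Peb P Q × Peb P' Q') → Prop
  | 0, L => AgreeDW d d' (pairElems E0 L)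
  | r + 1, L => AgreeDW d d' (pairElems E0 L) ∧
      (∀ q : P ⊕ Q, ∃ q' : P' ⊕ Q',
        DupWinDW d d' E0 B0 B0' r ((Peb.proc q, Peb.proc q') :: L)) ∧
      (∀ q' : P' ⊕ Q', ∃ q : P ⊕ Q,
        DupWinDW d d' E0 B0 B0' r ((Peb.proc q, Peb.proc q') :: L)) ∧
      (∀ m : ℕ, LegalBound d B0 (L.map Prod.fst) m →
        ∃ m' : ℕ, LegalBound d' B0' (L.map Prod.snd) m' ∧
          DupWinDW d d' E0 B0 B0' r ((Peb.bound m, Peb.bound m') :: L)) ∧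
      (∀ m' : ℕ, LegalBound d' B0' (L.map Prod.snd) m' →
        ∃ m : ℕ, LegalBound d B0 (L.map Prod.fst) m ∧
          DupWinDW d d' E0 B0 B0' r ((Peb.bound m, Peb.bound m') :: L)) ∧
      (∀ m : ℕ, LegalPref d B0 (L.map Prod.fst) m →
        ∃ m' : ℕ, LegalPref d' B0' (L.map Prod.snd) m' ∧
          DupWinDW d d' E0 B0 B0' r ((Peb.pref m, Peb.pref m') :: L)) ∧
      (∀ m' : ℕ, LegalPref d' B0' (L.map Prod.snd) m' →
        ∃ m : ℕ, LegalPref d B0 (L.map Prod.fst) m ∧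
          DupWinDW d d' E0 B0 B0' r ((Peb.pref m, Peb.pref m') :: L))

/-- The constants of a data word: interpretations of `cp` process constants,
`cb` bounding constants and `cx` prefix constants.  Validity: bounding and
prefix constants are positions, no two bounding constants share a class, and
each prefix constant is `≲` some bounding constant. -/
def ValidConsts {A B P Q : Type} {cp cb cx : ℕ} (d : Word (DMove A B P Q))
    (γP : Fin cp → P ⊕ Q) (γB : Fin cb → ℕ) (γX : Fin cx → ℕ) : Prop :=
  (∀ j, d (γB j) ≠ none) ∧ (∀ j, d (γX j) ≠ none) ∧
  (∀ i j, i ≠ j → procAt d (γB i) ≠ procAt d (γB j)) ∧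
  (∀ i, ∃ j, γX i < γB j ∧ procAt d (γX i) = procAt d (γB j))

/-- The matched constant elements determined by two interpretations of the same
constant symbols. -/
def constPairs {P Q P' Q' : Type} {cp cb cx : ℕ}
    (γP : Fin cp → P ⊕ Q) (γB : Fin cb → ℕ) (γX : Fin cx → ℕ)
    (γP' : Fin cp → P' ⊕ Q') (γB' : Fin cb → ℕ) (γX' : Fin cx → ℕ) :
    List (Elem P Q × Elem P' Q') :=
  (List.ofFn fun i : Fin cp =>
    ((Sum.inl (γP i) : Elem P Q), (Sum.inl (γP' i) : Elem P' Q'))) ++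
  (List.ofFn fun i : Fin cb =>
    ((Sum.inr (γB i) : Elem P Q), (Sum.inr (γB' i) : Elem P' Q'))) ++
  (List.ofFn fun i : Fin cx =>
    ((Sum.inr (γX i) : Elem P Q), (Sum.inr (γX' i) : Elem P' Q')))

/-! ### The standard synthesis game -/

/-- A System strategy in the standard synthesis game: given the finite data word
played so far, output a System action and process, or pass (`none` plays the
role of `ε`). -/
abbrev Strat (A B P Q : Type) : Type := List (DMove A B P Q) → Option (A × P)

/-- The list of the first `n` moves of a data word. -/
def histList {M : Type} (d : Word M) (n : ℕ) : List M := (List.range n).filterMap d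

/-- The data word `d` is compatible with the System strategy `σ`. -/
def CompatibleStd {A B P Q : Type} (σ : Strat A B P Q) (d : Word (DMove A B P Q)) :
    Prop :=
  ∀ i a p, d i = some (Sum.inl (a, p)) → σ (histList d i) = some (a, p)

/-- The data word `d` is fair with respect to `σ`: either it is finite and `σ`
passes after it, or (being infinite) if `σ` wants to play infinitely often then
System actions occur infinitely often. -/
def FairStd {A B P Q : Type} (σ : Strat A B P Q) (d : Word (DMove A B P Q)) : Prop :=
  (∃ n, d n = none ∧ (∀ i, i < n → d i ≠ none) ∧ σ (histList d n) = none) ∨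
  ((∀ n, d n ≠ none) ∧
    ((∀ N, ∃ i, N ≤ i ∧ σ (histList d (i + 1)) ≠ none) →
     (∀ N, ∃ i, N ≤ i ∧ ∃ a p, d i = some (Sum.inl (a, p)))))

/-- `σ` is winning for `φ` in the standard synthesis game: every compatible and
fair data word satisfies `φ`. -/
def WinningStd {A B P Q : Type} (φ : PDW A B 0 0 0) (σ : Strat A B P Q) : Prop :=
  ∀ d : Word (DMove A B P Q), Word.Closed d → CompatibleStd σ d → FairStd σ d →
    SatS d φ

/-- System has an `(nS, nE)`-winning strategy for `φ` in the standard synthesis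
game: a winning strategy whenever `|P_S| = nS` and `|P_E| = nE`. -/
def SystemWinsStd (A B : Type) (φ : PDW A B 0 0 0) (nS nE : ℕ) : Prop :=
  ∀ (P Q : Type), Finite P → Finite Q → Nat.card P = nS → Nat.card Q = nE →
    ∃ σ : Strat A B P Q, WinningStd φ σ

/-! ### The symmetric game -/

/-- A System strategy in the symmetric game: may answer by any finite sequence
of System moves (`[]` playing the role of `ε`). -/
abbrev SymStrat (A B P Q : Type) : Type := List (DMove A B P Q) → List (A × P)

/-- The history after `n` rounds of the symmetric game, the Environment playing
the finite blocks `env 0, env 1, …` and System answering according to `σ`,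
with strict alternation, Environment first. -/
def symHist {A B P Q : Type} (σ : SymStrat A B P Q) (env : ℕ → List (B × Q)) :
    ℕ → List (DMove A B P Q)
  | 0 => []
  | n + 1 =>
      let h := symHist σ env n ++ (env n).map Sum.inr
      h ++ (σ h).map Sum.inl

/-- The data word `d` is compatible with the symmetric strategy `σ`: it is the
limit of the histories of an alternating play in which System follows `σ`. -/
def CompatibleSym {A B P Q : Type} (σ : SymStrat A B P Q)
    (d : Word (DMove A B P Q)) : Prop :=
  ∃ env : ℕ → List (B × Q),
    (∀ n i x, (symHist σ env n)[i]? = some x → d i = some x) ∧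
    (∀ i, d i ≠ none → ∃ n, i < (symHist σ env n).length)

/-- Fairness in the symmetric game: if `d` is finite then `σ` passes after it. -/
def FairSym {A B P Q : Type} (σ : SymStrat A B P Q) (d : Word (DMove A B P Q)) :
    Prop :=
  ∀ n, d n = none → (∀ i, i < n → d i ≠ none) → σ (histList d n) = []

/-- `σ` is winning for `φ` in the symmetric game. -/
def WinningSym {A B P Q : Type} (φ : PDW A B 0 0 0) (σ : SymStrat A B P Q) : Prop :=
  ∀ d : Word (DMove A B P Q), Word.Closed d → CompatibleSym σ d → FairSym σ d →
    SatS d φ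

/-- System has an `(nS, nE)`-winning strategy for `φ` in the symmetric game. -/
def SystemWinsSym (A B : Type) (φ : PDW A B 0 0 0) (nS nE : ℕ) : Prop :=
  ∀ (P Q : Type), Finite P → Finite Q → Nat.card P = nS → Nat.card Q = nE →
    ∃ σ : SymStrat A B P Q, WinningSym φ σ

/-! ### The token game on types -/

/-- A node of the arena: a prefFO `k`-type of finite words. -/
abbrev Typ (A : Type) (k : ℕ) : Type := {T : Set (PSen A) // T ∈ WTypes A k}

/-- The initial node: the type of the empty word. -/
def initTyp (A : Type) (k : ℕ) : Typ A k :=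
  ⟨tp k (Word.ofList ([] : List A)), ⟨[], rfl⟩⟩

/-- The transition relation of the arena. -/
def typLe {A : Type} {k : ℕ} (τ τ' : Typ A k) : Prop := typeLe k τ.1 τ'.1

/-- A configuration: the position of each token in the arena.  `TS` and `TE` are
the sets of System and Environment tokens. -/
abbrev Conf (A : Type) (k : ℕ) (TS TE : Type) : Type := (TS ⊕ TE) → Typ A k

/-- A System strategy in the token game: given the sequence of configurations
so far, where to move each System token. -/
abbrev TokStrat (A : Type) (k : ℕ) (TS TE : Type) : Type :=
  List (Conf A k TS TE) → TS → Typ A k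

/-- A play of the token game: all tokens start on the initial node, tokens only
move along `⪯`, and the players strictly alternate, Environment first (at even
stages Environment moves, so System tokens stay put; at odd stages System moves). -/
def IsPlay {A : Type} {k : ℕ} {TS TE : Type} (conf : ℕ → Conf A k TS TE) : Prop :=
  (∀ t, conf 0 t = initTyp A k) ∧
  (∀ n t, typLe (conf n t) (conf (n + 1) t)) ∧
  (∀ n, Even n → ∀ t : TS, conf (n + 1) (Sum.inl t) = conf n (Sum.inl t)) ∧
  (∀ n, ¬ Even n → ∀ t : TE, conf (n + 1) (Sum.inr t) = conf n (Sum.inr t))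

/-- The play `conf` is compatible with the System strategy `σ`. -/
def CompatibleTok {A : Type} {k : ℕ} {TS TE : Type} (σ : TokStrat A k TS TE)
    (conf : ℕ → Conf A k TS TE) : Prop :=
  ∀ n, ¬ Even n → ∀ t : TS,
    conf (n + 1) (Sum.inl t) = σ (List.ofFn (fun i : Fin (n + 1) => conf i)) t

/-- The strategy `σ` only suggests legal moves (along `⪯`). -/
def StratLegal {A : Type} {k : ℕ} {TS TE : Type} (σ : TokStrat A k TS TE) : Prop :=
  ∀ (h : List (Conf A k TS TE)) (hne : h ≠ []) (t : TS),
    typLe (h.getLast hne (Sum.inl t)) (σ h t)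

/-- A configuration matches a `k`-counting function `c` (values `≥ k`
representing `k+`): the number of tokens on each type `τ` is exactly `c τ` when
`c τ < k`, and at least `k` otherwise. -/
def CfgMatches {A : Type} {k : ℕ} {TS TE : Type} (c : Typ A k → ℕ)
    (cfg : Conf A k TS TE) : Prop :=
  ∀ τ : Typ A k,
    (c τ < k → Nat.card {t : TS ⊕ TE // cfg t = τ} = c τ) ∧
    (¬ c τ < k → k ≤ Nat.card {t : TS ⊕ TE // cfg t = τ})

/-- The acceptance set `Acc_φ`: the `k`-counting functions `c` such that every
data word whose numbers of classes of each prefFO `k`-type match `c` satisfies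
`φ`. -/
def AccC (A B : Type) (k : ℕ) (φ : PDW A B 0 0 0) (c : Typ (A ⊕ B) k → ℕ) : Prop :=
  (∀ τ, c τ ≤ k) ∧
  ∀ (P Q : Type) (d : Word (DMove A B P Q)), Word.Closed d →
    (∀ τ : Typ (A ⊕ B) k,
      (c τ < k → Cardinal.mk ↥(classesOfType d k τ.1) = (c τ : Cardinal)) ∧
      (¬ c τ < k → (k : Cardinal) ≤ Cardinal.mk ↥(classesOfType d k τ.1))) →
    SatS d φ

/-- The strategy `σ` is winning in the token game for `φ`: every compatible
maximal play stabilizes in a limit configuration satisfying the acceptance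
condition. -/
def TokWinning {A B : Type} {k : ℕ} {TS TE : Type} (φ : PDW A B 0 0 0)
    (σ : TokStrat (A ⊕ B) k TS TE) : Prop :=
  ∀ conf : ℕ → Conf (A ⊕ B) k TS TE, IsPlay conf → CompatibleTok σ conf →
    ∃ N, (∀ n, N ≤ n → conf n = conf N) ∧
      ∃ c : Typ (A ⊕ B) k → ℕ, AccC A B k φ c ∧ CfgMatches c (conf N)

/-- The pair `(nS, nE)` is winning for System in the token game for `φ` (of
depth `k`). -/
def SystemWinsTok (A B : Type) (k : ℕ) (φ : PDW A B 0 0 0) (nS nE : ℕ) : Prop :=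
  ∀ (TS TE : Type), Finite TS → Finite TE → Nat.card TS = nS → Nat.card TE = nE →
    ∃ σ : TokStrat (A ⊕ B) k TS TE, StratLegal σ ∧ TokWinning φ σ

/-! ### An explicit encoding of prefFO^dw sentences, for decidability -/

/-- Encoding of a variable. -/
def encodeDVar {p b x : ℕ} : DVar p b x → ℕ
  | .inl i => Nat.pair 0 i.1
  | .inr (.inl i) => Nat.pair 1 i.1
  | .inr (.inr i) => Nat.pair 2 i.1

/-- An explicit injective encoding of prefFO^dw formulas over the alphabets
`Fin m` and `Fin n` into the natural numbers. -/
def encodePDW {m n : ℕ} : {p b x : ℕ} → PDW (Fin m) (Fin n) p b x → ℕ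
  | _, _, _, .eq v w => Nat.pair 0 (Nat.pair (encodeDVar v) (encodeDVar w))
  | _, _, _, .procS i => Nat.pair 1 i.1
  | _, _, _, .procE i => Nat.pair 2 i.1
  | _, _, _, .letter a v =>
      Nat.pair 3 (Nat.pair
        (Sum.elim (fun i => Nat.pair 0 i.1) (fun j => Nat.pair 1 j.1) a)
        (Sum.elim (fun i => Nat.pair 0 i.1) (fun j => Nat.pair 1 j.1) v))
  | _, _, _, .lesim i j => Nat.pair 4 (Nat.pair i.1 j.1)
  | _, _, _, .sim i v => Nat.pair 5 (Nat.pair i.1 (encodeDVar v))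
  | _, _, _, .and φ ψ => Nat.pair 6 (Nat.pair (encodePDW φ) (encodePDW ψ))
  | _, _, _, .not φ => Nat.pair 7 (encodePDW φ)
  | _, _, _, .exP φ => Nat.pair 8 (encodePDW φ)
  | _, _, _, .exB φ => Nat.pair 9 (encodePDW φ)
  | _, _, _, .exX y φ => Nat.pair 10 (Nat.pair y.1 (encodePDW φ))

end PrefSynth

/-!
The prefFO `k`-type of a word is determined by the set of pairs (letter at `m`, first-order
`(k-1)`-type of the prefix before `m`) over its positions `m`: Hintikka formulas relativised
below the bounding variable give one direction, Ehrenfeucht–Fraïssé games on the prefixes the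
other. If `w ≡ u`, the last position of `w = w₀ a` is matched by a position `m'` of `u`
carrying `a` whose prefix `u₀` is `(k-1)`-equivalent to `w₀`. First-order equivalence is a
congruence for appending, so for `u = u₀ a z` the word `w · (z · v) = w₀ a z v` realises
exactly the same pairs as `u · v = u₀ a z v`.
-/

namespace PrefSynth

variable {A : Type}

section EFGame

def Agree (x y : List A) {n : ℕ} (p q : Fin n → ℕ) : Prop :=
  ∀ i j, (p i = p j ↔ q i = q j) ∧ (p i < p j ↔ q i < q j) ∧ x[p i]? = y[q i]?

def EFWin (x y : List A) : ℕ → {n : ℕ} → (Fin n → ℕ) → (Fin n → ℕ) → Prop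
  | 0, _, p, q => Agree x y p q
  | r + 1, _, p, q => Agree x y p q ∧
      (∀ m < x.length, ∃ m' < y.length, EFWin x y r (Fin.snoc p m) (Fin.snoc q m')) ∧
      (∀ m' < y.length, ∃ m < x.length, EFWin x y r (Fin.snoc p m) (Fin.snoc q m'))

def EFEquiv (x y : List A) (r : ℕ) : Prop :=
  EFWin x y r (Fin.elim0 : Fin 0 → ℕ) Fin.elim0

variable {x y : List A} {n : ℕ} {p q : Fin n → ℕ}

lemma Agree.symm (h : Agree x y p q) : Agree y x q p := fun i j =>
  ⟨(h i j).1.symm, (h i j).2.1.symm, (h i j).2.2.symm⟩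

lemma EFWin.agree : ∀ {r n} {p q : Fin n → ℕ}, EFWin x y r p q → Agree x y p q
  | 0, _, _, _, h => h
  | _ + 1, _, _, _, h => h.1

lemma EFWin.symm : ∀ {r n} {p q : Fin n → ℕ}, EFWin x y r p q → EFWin y x r q p
  | 0, _, _, _, h => Agree.symm h
  | _ + 1, _, _, _, ⟨ha, forth, back⟩ =>
    ⟨ha.symm, fun m' hm' => (back m' hm').imp fun _ ⟨hm, hw⟩ => ⟨hm, hw.symm⟩,
      fun m hm => (forth m hm).imp fun _ ⟨hm', hw⟩ => ⟨hm', hw.symm⟩⟩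

lemma EFWin.refl (x : List A) : ∀ (r : ℕ) {n} (p : Fin n → ℕ), EFWin x x r p p
  | 0, _, _ => fun _ _ => ⟨Iff.rfl, Iff.rfl, rfl⟩
  | r + 1, _, _ => ⟨fun _ _ => ⟨Iff.rfl, Iff.rfl, rfl⟩,
      fun m hm => ⟨m, hm, EFWin.refl x r _⟩, fun m hm => ⟨m, hm, EFWin.refl x r _⟩⟩

lemma EFWin.of_succ : ∀ {r n} {p q : Fin n → ℕ}, EFWin x y (r + 1) p q → EFWin x y r p q
  | 0, _, _, _, h => h.1
  | _ + 1, _, _, _, ⟨ha, forth, back⟩ =>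
    ⟨ha, fun m hm => (forth m hm).imp fun _ ⟨hm', hw⟩ => ⟨hm', hw.of_succ⟩,
      fun m' hm' => (back m' hm').imp fun _ ⟨hm, hw⟩ => ⟨hm, hw.of_succ⟩⟩

/-- The pebbles `(P, Q)` on `x ++ z` and `y ++ z` are either pebbles `(p, q)` on `x` and `y`,
or sit at the same offset in the common suffix `z`. -/
def AppendCompatible (x y : List A) {n n' : ℕ} (P Q : Fin n → ℕ) (p q : Fin n' → ℕ) :
    Prop :=
  ∀ i, (∃ i', P i = p i' ∧ Q i = q i' ∧ p i' < x.length ∧ q i' < y.length) ∨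
    ∃ j, P i = x.length + j ∧ Q i = y.length + j

section AppendCompatible

variable {n' : ℕ} {P Q : Fin n → ℕ} {p q : Fin n' → ℕ}

lemma AppendCompatible.symm (h : AppendCompatible x y P Q p q) : AppendCompatible y x Q P q p :=
  fun i => (h i).imp (fun ⟨i', h₁, h₂, h₃, h₄⟩ => ⟨i', h₂, h₁, h₄, h₃⟩)
    fun ⟨j, h₁, h₂⟩ => ⟨j, h₂, h₁⟩

lemma AppendCompatible.snoc_left {m m' : ℕ} (h : AppendCompatible x y P Q p q)
    (hm : m < x.length) (hm' : m' < y.length) :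
    AppendCompatible x y (Fin.snoc P m) (Fin.snoc Q m') (Fin.snoc p m) (Fin.snoc q m') := by
  intro i
  induction i using Fin.lastCases with
  | last => exact Or.inl ⟨Fin.last n', by simp, by simp, by simpa, by simpa⟩
  | cast i =>
    simp only [Fin.snoc_castSucc]
    refine (h i).imp_left fun ⟨i', h₁, h₂, h₃, h₄⟩ => ⟨i'.castSucc, ?_⟩
    simpa only [Fin.snoc_castSucc] using ⟨h₁, h₂, h₃, h₄⟩

lemma AppendCompatible.snoc_right (h : AppendCompatible x y P Q p q) (j : ℕ) :
    AppendCompatible x y (Fin.snoc P (x.length + j)) (Fin.snoc Q (y.length + j)) p q := by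
  intro i
  induction i using Fin.lastCases with
  | last => exact Or.inr ⟨j, by simp, by simp⟩
  | cast i => simpa only [Fin.snoc_castSucc] using h i

lemma Agree.append (z : List A) (h : Agree x y p q) (hc : AppendCompatible x y P Q p q) :
    Agree (x ++ z) (y ++ z) P Q := by
  have hletter : ∀ i, (x ++ z)[P i]? = (y ++ z)[Q i]? := fun i => by
    rcases hc i with ⟨i', hP, hQ, hp, hq⟩ | ⟨s, hP, hQ⟩
    · rw [hP, hQ, List.getElem?_append_left hp, List.getElem?_append_left hq]
      exact (h i' i').2.2
    · simp [hP, hQ, List.getElem?_append_right]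
  intro i j
  suffices (P i = P j ↔ Q i = Q j) ∧ (P i < P j ↔ Q i < Q j) from
    ⟨this.1, this.2, hletter i⟩
  rcases hc i with ⟨i', hPi, hQi, hpi, hqi⟩ | ⟨s, hPi, hQi⟩ <;>
    rcases hc j with ⟨j', hPj, hQj, hpj, hqj⟩ | ⟨t, hPj, hQj⟩ <;>
    rw [hPi, hQi, hPj, hQj]
  · exact ⟨(h i' j').1, (h i' j').2.1⟩
  all_goals omega

lemma EFWin.append_forth {z : List A} {r : ℕ}
    (ih : ∀ {n n'} {P Q : Fin n → ℕ} {p q : Fin n' → ℕ}, EFWin x y r p q →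
      AppendCompatible x y P Q p q → EFWin (x ++ z) (y ++ z) r P Q)
    (h : EFWin x y (r + 1) p q) (hc : AppendCompatible x y P Q p q) :
    ∀ m < (x ++ z).length, ∃ m' < (y ++ z).length,
      EFWin (x ++ z) (y ++ z) r (Fin.snoc P m) (Fin.snoc Q m') := by
  intro m hm
  rw [List.length_append] at hm
  by_cases hmx : m < x.length
  · obtain ⟨m', hm', hw⟩ := h.2.1 m hmx
    exact ⟨m', by simp; omega, ih hw (hc.snoc_left hmx hm')⟩
  · obtain ⟨j, rfl⟩ := Nat.exists_eq_add_of_le (not_lt.mp hmx)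
    exact ⟨y.length + j, by simp; omega, ih h.of_succ (hc.snoc_right j)⟩

end AppendCompatible

/-- Duplicator answers moves in the common suffix by copying them. -/
theorem EFWin.append (z : List A) : ∀ (r : ℕ) {x y : List A} {n n' : ℕ} {P Q : Fin n → ℕ}
    {p q : Fin n' → ℕ}, EFWin x y r p q → AppendCompatible x y P Q p q →
    EFWin (x ++ z) (y ++ z) r P Q
  | 0, _, _, _, _, _, _, _, _, h, hc => Agree.append z h hc
  | r + 1, _, _, _, _, _, _, _, _, h, hc =>
    ⟨h.agree.append z hc, append_forth (EFWin.append z r) h hc, fun m' hm' =>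
      (append_forth (fun hw hc' => (EFWin.append z r hw.symm hc'.symm).symm) h.symm hc.symm
        m' hm').imp fun _ ⟨hm, hw⟩ => ⟨hm, hw.symm⟩⟩

lemma EFEquiv.append {r : ℕ} (h : EFEquiv x y r) (z : List A) : EFEquiv (x ++ z) (y ++ z) r :=
  EFWin.append z r h fun i => i.elim0

end EFGame

namespace PFm

variable {n : ℕ}

def top : PFm A (n + 1) := .eq 0 0

def or (φ ψ : PFm A n) : PFm A n := .not (.and (.not φ) (.not ψ))

def allLt (φ : PFm A (n + 2)) : PFm A (n + 1) := .not (.exlt (.not φ))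

def bigAnd (l : List (PFm A (n + 1))) : PFm A (n + 1) := l.foldr .and top

def bigOr (l : List (PFm A (n + 1))) : PFm A (n + 1) := l.foldr .or (.not top)

def literal (P : Prop) [Decidable P] (φ : PFm A n) : PFm A n := if P then φ else .not φ

variable {w : Word A}

@[simp] lemma sat_top (ρ : Fin (n + 1) → ℕ) : (top : PFm A (n + 1)).Sat w ρ := rfl

@[simp] lemma sat_and (φ ψ : PFm A n) (ρ : Fin n → ℕ) :
    (φ.and ψ).Sat w ρ ↔ φ.Sat w ρ ∧ ψ.Sat w ρ := Iff.rfl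

@[simp] lemma sat_not (φ : PFm A n) (ρ : Fin n → ℕ) : φ.not.Sat w ρ ↔ ¬ φ.Sat w ρ :=
  Iff.rfl

@[simp] lemma sat_or (φ ψ : PFm A n) (ρ : Fin n → ℕ) :
    (φ.or ψ).Sat w ρ ↔ φ.Sat w ρ ∨ ψ.Sat w ρ := by
  simp only [or, sat_not, sat_and]; tauto

@[simp] lemma sat_bigAnd (l : List (PFm A (n + 1))) (ρ : Fin (n + 1) → ℕ) :
    (bigAnd l).Sat w ρ ↔ ∀ φ ∈ l, φ.Sat w ρ := by
  induction l <;> simp_all [bigAnd]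

@[simp] lemma sat_bigOr (l : List (PFm A (n + 1))) (ρ : Fin (n + 1) → ℕ) :
    (bigOr l).Sat w ρ ↔ ∃ φ ∈ l, φ.Sat w ρ := by
  induction l <;> simp_all [bigOr]

@[simp] lemma sat_literal (P : Prop) [Decidable P] (φ : PFm A n) (ρ : Fin n → ℕ) :
    (literal P φ).Sat w ρ ↔ (φ.Sat w ρ ↔ P) := by
  unfold literal; split_ifs <;> simp [*]

lemma depth_bigAnd_le {r : ℕ} {l : List (PFm A (n + 1))} (h : ∀ φ ∈ l, φ.depth ≤ r) :
    (bigAnd l).depth ≤ r := by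
  induction l <;> simp_all [bigAnd, depth, top]

lemma depth_bigOr_le {r : ℕ} {l : List (PFm A (n + 1))} (h : ∀ φ ∈ l, φ.depth ≤ r) :
    (bigOr l).depth ≤ r := by
  induction l <;> simp_all [bigOr, or, depth, top]

lemma depth_literal_le {r : ℕ} (P : Prop) [Decidable P] {φ : PFm A n} (h : φ.depth ≤ r) :
    (literal P φ).depth ≤ r := by
  unfold literal; split_ifs <;> simpa [depth]

end PFm

open PFm

section Hintikka

variable {x y : List A} {b n : ℕ} {p q : Fin n → ℕ}

lemma sat_exlt_ofList (hb : b ≤ y.length) (φ : PFm A (n + 2)) :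
    (PFm.exlt φ).Sat (Word.ofList y) (Fin.cons b p) ↔
      ∃ m < b, φ.Sat (Word.ofList y) (Fin.cons b (Fin.snoc p m)) := by
  simp only [PFm.Sat, Fin.cons_zero, Fin.cons_snoc_eq_snoc_cons, Word.pos, Word.ofList]
  refine exists_congr fun m => ⟨fun ⟨_, h⟩ => h, fun ⟨hm, h⟩ => ⟨?_, hm, h⟩⟩
  simp only [ne_eq, List.getElem?_eq_none_iff, not_le]
  omega

lemma sat_allLt_ofList (hb : b ≤ y.length) (φ : PFm A (n + 2)) :
    (allLt φ).Sat (Word.ofList y) (Fin.cons b p) ↔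
      ∀ m < b, φ.Sat (Word.ofList y) (Fin.cons b (Fin.snoc p m)) := by
  simp [allLt, sat_exlt_ofList hb]

lemma forall_snoc_lt {B m : ℕ} (hp : ∀ i, p i < B) (hm : m < B) :
    ∀ i, (Fin.snoc p m : Fin (n + 1) → ℕ) i < B :=
  Fin.lastCases (by simpa) (by simpa)

lemma agree_take_right_iff (hq : ∀ i, q i < b) : Agree x (y.take b) p q ↔ Agree x y p q := by
  simp only [Agree, List.getElem?_take_of_lt (hq _)]

/-- Variable `0` is the bounding variable and `i.succ` stands for the pebble `p i`. -/
def atomicType (x : List A) (p : Fin n → ℕ) : PFm A (n + 1) :=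
  bigAnd <| (List.finRange n).flatMap fun i => (List.finRange n).map fun j =>
    (literal (p i = p j) (.eq i.succ j.succ)).and <|
      (literal (p i < p j) (.lt i.succ j.succ)).and <|
      (x[p i]?).elim top fun a => .letter a i.succ

lemma depth_atomicType (x : List A) (p : Fin n → ℕ) : (atomicType x p).depth = 0 := by
  refine Nat.le_zero.mp (depth_bigAnd_le ?_)
  simp only [List.mem_flatMap, List.mem_map, forall_exists_index, and_imp]
  rintro _ i - j - rfl
  simp only [PFm.depth, max_le_iff]
  refine ⟨depth_literal_le _ le_rfl, depth_literal_le _ le_rfl, ?_⟩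
  cases x[p i]? <;> exact le_rfl

lemma sat_atomicType (hp : ∀ i, p i < x.length) :
    (atomicType x p).Sat (Word.ofList y) (Fin.cons b q) ↔ Agree x y p q := by
  have hletter : ∀ i, ((x[p i]?).elim top fun a => .letter a i.succ).Sat (Word.ofList y)
      (Fin.cons b q) ↔ x[p i]? = y[q i]? := fun i => by
    rw [List.getElem?_eq_getElem (hp i)]
    simp [PFm.Sat, Word.ofList, eq_comm]
  simp only [atomicType, sat_bigAnd, List.forall_mem_flatMap, List.forall_mem_map,
    List.mem_finRange, forall_const, sat_and, sat_literal, hletter, Agree]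
  simp [PFm.Sat, iff_comm]

def hintikka (x : List A) : ℕ → {n : ℕ} → (Fin n → ℕ) → PFm A (n + 1)
  | 0, _, p => atomicType x p
  | r + 1, _, p => (atomicType x p).and <|
      (bigAnd ((List.range x.length).map fun m => .exlt (hintikka x r (Fin.snoc p m)))).and <|
      allLt (bigOr ((List.range x.length).map fun m => hintikka x r (Fin.snoc p m)))

lemma depth_hintikka_le (x : List A) :
    ∀ (r : ℕ) {n : ℕ} (p : Fin n → ℕ), (hintikka x r p).depth ≤ r
  | 0, _, p => (depth_atomicType x p).le
  | r + 1, _, p => by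
    have hbigAnd := depth_bigAnd_le (r := r + 1)
      (l := (List.range x.length).map fun m => .exlt (hintikka x r (Fin.snoc p m)))
      (by simpa [PFm.depth] using fun m _ => depth_hintikka_le x r _)
    have hbigOr := depth_bigOr_le (r := r)
      (l := (List.range x.length).map fun m => hintikka x r (Fin.snoc p m))
      (by simpa using fun m _ => depth_hintikka_le x r _)
    simp only [hintikka, allLt, PFm.depth, depth_atomicType]
    omega

lemma sat_hintikka_iff (hb : b ≤ y.length) : ∀ (r : ℕ) {n : ℕ} {p q : Fin n → ℕ},
    (∀ i, p i < x.length) → (∀ i, q i < b) →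
    ((hintikka x r p).Sat (Word.ofList y) (Fin.cons b q) ↔ EFWin x (y.take b) r p q)
  | 0, _, _, _, hp, hq => (sat_atomicType hp).trans (agree_take_right_iff hq).symm
  | r + 1, _, p, q, hp, hq => by
    simp only [hintikka, sat_and, sat_atomicType hp, sat_bigAnd, sat_bigOr, List.mem_map,
      List.mem_range, forall_exists_index, and_imp, forall_apply_eq_imp_iff₂, exists_exists_and_eq_and,
      sat_exlt_ofList hb, sat_allLt_ofList hb, EFWin, List.length_take_of_le hb,
      agree_take_right_iff hq]
    refine and_congr_right fun _ => and_congr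
      (forall₂_congr fun m hm => exists_congr fun m' => and_congr_right fun hm' => ?_)
      (forall₂_congr fun m' hm' => exists_congr fun m => and_congr_right fun hm => ?_) <;>
    exact sat_hintikka_iff hb r (forall_snoc_lt hp hm) (forall_snoc_lt hq hm')

end Hintikka

section Transfer

lemma exists_lt_iff_of_forth_back {P Q : ℕ → Prop} {R : ℕ → ℕ → Prop} {b b' : ℕ}
    (forth : ∀ m < b, ∃ m' < b', R m m') (back : ∀ m' < b', ∃ m < b, R m m')
    (hPQ : ∀ m < b, ∀ m' < b', R m m' → (P m ↔ Q m')) :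
    (∃ m < b, P m) ↔ ∃ m' < b', Q m' := by
  constructor
  · rintro ⟨m, hm, hP⟩
    obtain ⟨m', hm', hR⟩ := forth m hm
    exact ⟨m', hm', (hPQ m hm m' hm' hR).mp hP⟩
  · rintro ⟨m', hm', hQ⟩
    obtain ⟨m, hm, hR⟩ := back m' hm'
    exact ⟨m, hm, (hPQ m hm m' hm' hR).mpr hQ⟩

variable {w u : List A} {b b' n : ℕ} {p q : Fin n → ℕ}

lemma Agree.cons (h : Agree (w.take b) (u.take b') p q) (hp : ∀ i, p i < b) (hq : ∀ i, q i < b')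
    (hl : w[b]? = u[b']?) : Agree w u (Fin.cons b p) (Fin.cons b' q) := by
  have h' : Agree w u p q :=
    ((agree_take_right_iff hp).mp ((agree_take_right_iff hq).mp h).symm).symm
  intro i j
  induction i using Fin.cases <;> induction j using Fin.cases <;>
    simp only [Fin.cons_zero, Fin.cons_succ]
  case zero.zero => exact ⟨by simp, by simp, hl⟩
  case zero.succ j => exact ⟨by grind, by grind, hl⟩
  case succ.zero i => exact ⟨by grind, by grind, (h' i i).2.2⟩
  case succ.succ i j => exact h' i j

theorem sat_iff_of_efWin (hb : b < w.length) (hb' : b' < u.length) (hl : w[b]? = u[b']?) :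
    ∀ {n : ℕ} (φ : PFm A (n + 1)) {r : ℕ} {p q : Fin n → ℕ}, φ.depth ≤ r →
      (∀ i, p i < b) → (∀ i, q i < b') → EFWin (w.take b) (u.take b') r p q →
      (φ.Sat (Word.ofList w) (Fin.cons b p) ↔ φ.Sat (Word.ofList u) (Fin.cons b' q))
  | _, .eq i j, _, _, _, _, hp, hq, hW => (hW.agree.cons hp hq hl i j).1
  | _, .lt i j, _, _, _, _, hp, hq, hW => (hW.agree.cons hp hq hl i j).2.1
  | _, .letter a i, _, _, _, _, hp, hq, hW => by
    simp only [PFm.Sat, Word.ofList, (hW.agree.cons hp hq hl i i).2.2]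
  | _, .and φ ψ, _, _, _, hd, hp, hq, hW =>
    and_congr (sat_iff_of_efWin hb hb' hl φ (le_of_max_le_left hd) hp hq hW)
      (sat_iff_of_efWin hb hb' hl ψ (le_of_max_le_right hd) hp hq hW)
  | _, .not φ, _, _, _, hd, hp, hq, hW => not_congr (sat_iff_of_efWin hb hb' hl φ hd hp hq hW)
  | _, .exlt φ, 0, _, _, hd, _, _, _ => absurd hd (by simp [PFm.depth])
  | _, .exlt φ, r + 1, _, _, hd, hp, hq, hW => by
    rw [sat_exlt_ofList hb.le, sat_exlt_ofList hb'.le]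
    simp only [EFWin, List.length_take_of_le hb.le, List.length_take_of_le hb'.le] at hW
    exact exists_lt_iff_of_forth_back hW.2.1 hW.2.2 fun m hm m' hm' hW' =>
      sat_iff_of_efWin hb hb' hl φ (Nat.le_of_succ_le_succ hd) (forall_snoc_lt hp hm)
        (forall_snoc_lt hq hm') hW'

end Transfer

section PrefixGame

variable {k : ℕ} {x y : List A}

lemma sat_exB_ofList (x : List A) (φ : PFm A 1) :
    (PSen.exB φ).Sat (Word.ofList x) ↔
      ∃ m < x.length, φ.Sat (Word.ofList x) (Fin.cons m Fin.elim0) := by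
  have hρ : ∀ m : ℕ, (fun _ => m : Fin 1 → ℕ) = Fin.cons m Fin.elim0 := fun m =>
    funext fun i => by rw [Fin.fin_one_eq_zero i]; rfl
  simp only [PSen.Sat, Word.pos, Word.ofList, ne_eq, List.getElem?_eq_none_iff, not_le, hρ]

def PrefCovers (k : ℕ) (x y : List A) : Prop :=
  ∀ m < x.length, ∃ m' < y.length, x[m]? = y[m']? ∧ EFEquiv (x.take m) (y.take m') (k - 1)

/-- Duplicator wins the `k`-round prefix game: the first round places the bounding pebbles on
positions with the same letter, the remaining `k - 1` rounds are played on the prefixes before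
them. -/
def PrefEFEquiv (k : ℕ) (x y : List A) : Prop := PrefCovers k x y ∧ PrefCovers k y x

lemma PrefCovers.sat_exB (h : PrefCovers k x y) {φ : PFm A 1} (hd : φ.depth < k) :
    (PSen.exB φ).Sat (Word.ofList x) → (PSen.exB φ).Sat (Word.ofList y) := by
  rw [sat_exB_ofList, sat_exB_ofList]
  rintro ⟨m, hm, hφ⟩
  obtain ⟨m', hm', hl, hW⟩ := h m hm
  exact ⟨m', hm', (sat_iff_of_efWin hm hm' hl φ (Nat.le_sub_one_of_lt hd)
    (fun i => i.elim0) (fun i => i.elim0) hW).mp hφ⟩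

lemma PrefEFEquiv.prefEquiv (h : PrefEFEquiv k x y) :
    prefEquiv k (Word.ofList x) (Word.ofList y) := by
  intro s
  induction s with
  | exB φ => exact fun hd => ⟨h.1.sat_exB hd, h.2.sat_exB hd⟩
  | and s t hs ht =>
    exact fun hd => and_congr (hs (le_of_max_le_left hd)) (ht (le_of_max_le_right hd))
  | not s hs => exact fun hd => not_congr (hs hd)

def hintikkaSen (a : A) (x : List A) (r : ℕ) : PSen A :=
  .exB ((PFm.letter a 0).and (hintikka x r Fin.elim0))

lemma depth_hintikkaSen_le (a : A) (x : List A) (r : ℕ) :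
    (hintikkaSen a x r).depth ≤ r + 1 := by
  have := depth_hintikka_le x r Fin.elim0
  simp only [hintikkaSen, PSen.depth, PFm.depth]
  omega

lemma sat_hintikkaSen_iff {a : A} {r : ℕ} :
    (hintikkaSen a x r).Sat (Word.ofList y) ↔
      ∃ m' < y.length, y[m']? = some a ∧ EFEquiv x (y.take m') r := by
  rw [hintikkaSen, sat_exB_ofList]
  exact exists_congr fun m' => and_congr_right fun hm' =>
    and_congr Iff.rfl (sat_hintikka_iff hm'.le r (fun i => i.elim0) (fun i => i.elim0))

lemma PrefCovers.of_prefEquiv (hk : 1 ≤ k) (h : prefEquiv k (Word.ofList x) (Word.ofList y)) :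
    PrefCovers k x y := by
  intro m hm
  have hx : (hintikkaSen x[m] (x.take m) (k - 1)).Sat (Word.ofList x) :=
    sat_hintikkaSen_iff.mpr ⟨m, hm, List.getElem?_eq_getElem hm, EFWin.refl _ _ _⟩
  have hd := depth_hintikkaSen_le x[m] (x.take m) (k - 1)
  obtain ⟨m', hm', hl, hW⟩ := sat_hintikkaSen_iff.mp ((h _ (by omega)).mp hx)
  exact ⟨m', hm', by rw [hl, List.getElem?_eq_getElem hm], hW⟩

lemma tp_eq_iff_prefEquiv {w w' : Word A} : tp k w = tp k w' ↔ prefEquiv k w w' := by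
  simp only [Set.ext_iff, tp, Set.mem_ofPred_eq, and_congr_right_iff, prefEquiv]

theorem tp_eq_iff_prefEFEquiv (hk : 1 ≤ k) :
    tp k (Word.ofList x) = tp k (Word.ofList y) ↔ PrefEFEquiv k x y := by
  rw [tp_eq_iff_prefEquiv]
  exact ⟨fun h => ⟨.of_prefEquiv hk h, .of_prefEquiv hk fun s hs => (h s hs).symm⟩,
    PrefEFEquiv.prefEquiv⟩

end PrefixGame

section Extension

variable {k : ℕ} {x y x₀ y₀ c : List A}

lemma PrefCovers.append_common (h : PrefCovers k x y) (hx₀ : x₀ <+: x) (hx : x <+: x₀ ++ c)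
    (hy : y <+: y₀ ++ c) (h₀ : EFEquiv x₀ y₀ (k - 1)) :
    PrefCovers k (x₀ ++ c) (y₀ ++ c) := by
  intro M hM
  by_cases hMx : M < x₀.length
  · have hMx' := hMx.trans_le hx₀.length_le
    obtain ⟨m', hm', hl, hW⟩ := h M hMx'
    obtain ⟨s, hs⟩ := hx
    obtain ⟨t, ht⟩ := hy
    rw [← hs, ← ht]
    refine ⟨m', by simp; omega, ?_, ?_⟩
    · rwa [List.getElem?_append_left hMx', List.getElem?_append_left hm']
    · rwa [List.take_append_of_le_length hMx'.le, List.take_append_of_le_length hm'.le]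
  · obtain ⟨j, rfl⟩ := Nat.exists_eq_add_of_le (not_lt.mp hMx)
    refine ⟨y₀.length + j, by simp at hM ⊢; omega, by simp [List.getElem?_append_right], ?_⟩
    rw [List.take_length_add_append, List.take_length_add_append]
    exact h₀.append _

/-- Positions before `x₀`, resp. `y₀`, are answered as in the game on `x` and `y`, later ones
by copying `c`. -/
lemma PrefEFEquiv.append_common (h : PrefEFEquiv k x y) (hx₀ : x₀ <+: x) (hy₀ : y₀ <+: y)
    (hx : x <+: x₀ ++ c) (hy : y <+: y₀ ++ c) (h₀ : EFEquiv x₀ y₀ (k - 1)) :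
    PrefEFEquiv k (x₀ ++ c) (y₀ ++ c) :=
  ⟨h.1.append_common hx₀ hx hy h₀, h.2.append_common hy₀ hy hx (EFWin.symm h₀)⟩

lemma PrefEFEquiv.exists_append {w u : List A} (h : PrefEFEquiv k w u) (v : List A) :
    ∃ w', PrefEFEquiv k (w ++ w') (u ++ v) := by
  rcases w.eq_nil_or_concat with rfl | ⟨w₀, a, rfl⟩
  · refine ⟨u ++ v, ?_⟩
    simpa using h.append_common (x₀ := []) (y₀ := []) List.nil_prefix List.nil_prefix
      List.nil_prefix ⟨v, rfl⟩ (EFWin.refl _ _ _)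
  · rw [List.concat_eq_append] at h ⊢
    obtain ⟨u₀, z, rfl, h₀⟩ :
        ∃ u₀ z, u = u₀ ++ a :: z ∧ EFEquiv w₀ u₀ (k - 1) := by
      obtain ⟨m', hm', hl, h₀⟩ := h.1 w₀.length (by simp)
      refine ⟨u.take m', u.drop (m' + 1), ?_, by simpa using h₀⟩
      have ha : u[m'] = a := by simpa [List.getElem?_eq_getElem hm', eq_comm] using hl
      rw [← ha, ← List.drop_eq_getElem_cons hm', List.take_append_drop]
    refine ⟨z ++ v, ?_⟩
    simpa using h.append_common (c := a :: (z ++ v)) (List.prefix_append _ _)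
      (List.prefix_append _ _) ⟨z ++ v, by simp⟩ ⟨v, by simp⟩ h₀

end Extension

theorem typeLe_extension_general {A : Type} (k : ℕ) (hk : 1 ≤ k)
    (τ τ' : Set (PSen A))
    (hle : typeLe k τ τ') :
    ∀ w : List A, tp k (Word.ofList w) = τ →
      ∃ w' : List A, tp k (Word.ofList (w ++ w')) = τ' := by
  obtain ⟨u, v, rfl, rfl⟩ := hle
  intro w hw
  obtain ⟨w', hw'⟩ := ((tp_eq_iff_prefEFEquiv hk).mp hw).exists_append v
  exact ⟨w', (tp_eq_iff_prefEFEquiv hk).mpr hw'⟩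

/-- Let `k ≥ 1` and `τ ⪯ τ'` in `Types_k`. Then every finite
word `w` of type `τ` has an extension `w·w'` of type `τ'`. -/
theorem typeLe_extension {A : Type} [Finite A] (k : ℕ) (hk : 1 ≤ k)
    (τ τ' : Set (PSen A)) (hτ : τ ∈ WTypes A k) (hτ' : τ' ∈ WTypes A k)
    (hle : typeLe k τ τ') :
    ∀ w : List A, tp k (Word.ofList w) = τ →
      ∃ w' : List A, tp k (Word.ofList (w ++ w')) = τ' :=
  typeLe_extension_general k hk τ τ' hle

end PrefSynth
end

section
/- For every k ∈ ℕ, the relation ⪯ is a partial order on Types_k (reflexive, transitive and antisymmetric), and tp_k(ε), the prefFO k-type of the empty word, is its minimum: tp_k(ε) ⪯ τ for every τ ∈ Types_k. -/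
set_option maxHeartbeats 1000000

/-!
Every prefFO sentence of depth `r + 1` is a boolean combination of sentences `∃ x̄, φ x̄` with
`φ` of depth `r`, so the `(r + 1)`-type of a word `w` is determined by the set `boundTypes r w` of
the depth-`r` types of its positions taken as the bounding variable; conversely, Hintikka formulas
show that it determines this set. Types are handled semantically, as `ltype`, the
Ehrenfeucht–Fraïssé type of a pebble assignment. The set only grows along extensions, so an
extension that returns to the type of the original word never left it: this is antisymmetry.

For transitivity, the type of a position is its letter together with the `endType` of the prefix
before it, and `endType` is a right congruence (one-letter Ehrenfeucht–Fraïssé composition). So if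
`w'` has the same type as `w`, its last position matches some position of `w`; continuing `w'` as
`w` continues after that position makes the two words agree on both invariants, and from then on
every extension of `w` is matched by the same extension of `w'`.
-/

namespace PrefSynth

section

variable {A : Type}

abbrev Atom (A : Type) (n : ℕ) : Type := (Fin n → Fin n → Prop) × (Fin n → Option A)

def atomOf (l : List A) {n : ℕ} (ρ : Fin n → ℕ) : Atom A n :=
  (fun i j => ρ i ≤ ρ j, fun i => l[ρ i]?)

theorem atomOf_eq_iff {l l' : List A} {n : ℕ} {ρ ρ' : Fin n → ℕ} :
    atomOf l ρ = atomOf l' ρ' ↔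
      (∀ i j, ρ i ≤ ρ j ↔ ρ' i ≤ ρ' j) ∧ ∀ i, l[ρ i]? = l'[ρ' i]? := by
  simp only [atomOf, Prod.mk.injEq, funext_iff, eq_iff_iff]

def LType (A : Type) : ℕ → ℕ → Type
  | 0, n => Atom A (n + 1)
  | r + 1, n => Atom A (n + 1) × Set (LType A r (n + 1))

/-- The semantic depth-`r` prefFO type of the pebble assignment `ρ` in `l`, pebble `0` being the
bounding variable: its atomic type together with the types of all its extensions by a position
below the bound. -/
def ltype : (r : ℕ) → List A → {n : ℕ} → (Fin (n + 1) → ℕ) → LType A r n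
  | 0, l, _, ρ => atomOf l ρ
  | r + 1, l, _, ρ =>
      (atomOf l ρ, (fun m => ltype r l (Fin.snoc ρ m)) '' Set.Iio (min l.length (ρ 0)))

theorem atomOf_eq_of_ltype_eq {r : ℕ} {l l' : List A} {n : ℕ} {ρ ρ' : Fin (n + 1) → ℕ}
    (h : ltype r l ρ = ltype r l' ρ') : atomOf l ρ = atomOf l' ρ' := by
  cases r with
  | zero => exact h
  | succ r => exact congrArg Prod.fst h

theorem ltype_succ_eq_iff {r : ℕ} {l l' : List A} {n : ℕ} {ρ ρ' : Fin (n + 1) → ℕ} :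
    ltype (r + 1) l ρ = ltype (r + 1) l' ρ' ↔ atomOf l ρ = atomOf l' ρ' ∧
      (∀ m < l.length, m < ρ 0 → ∃ m' < l'.length, m' < ρ' 0 ∧
        ltype r l (Fin.snoc ρ m) = ltype r l' (Fin.snoc ρ' m')) ∧
      (∀ m' < l'.length, m' < ρ' 0 → ∃ m < l.length, m < ρ 0 ∧
        ltype r l (Fin.snoc ρ m) = ltype r l' (Fin.snoc ρ' m')) := by
  change ((atomOf l ρ, _) : Atom A (n + 1) × Set (LType A r (n + 1))) = (atomOf l' ρ', _) ↔ _
  simp only [Prod.mk.injEq, Set.Subset.antisymm_iff, Set.subset_def, Set.forall_mem_image]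
  simp only [Set.mem_image, Set.mem_Iio, lt_min_iff, and_imp, and_assoc]
  simp only [eq_comm (a := ltype r l' _)]

theorem Word.pos_ofList {l : List A} {m : ℕ} : Word.pos (Word.ofList l) m ↔ m < l.length := by
  simp [Word.pos, Word.ofList]

theorem forall_ne_zero_snoc {n : ℕ} {P : ℕ → Prop} {ρ : Fin (n + 1) → ℕ} {m : ℕ}
    (hρ : ∀ i, i ≠ 0 → P (ρ i)) (hm : P m) :
    ∀ i : Fin (n + 2), i ≠ 0 → P ((Fin.snoc ρ m : Fin (n + 2) → ℕ) i) := by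
  refine Fin.lastCases (fun _ => by simpa) fun j hj => ?_
  rw [Fin.snoc_castSucc]
  exact hρ j (by rintro rfl; exact hj rfl)

theorem sat_iff_of_ltype_eq : ∀ {n : ℕ} (φ : PFm A (n + 1)) {r : ℕ}, φ.depth ≤ r →
    ∀ {l l' : List A} {ρ ρ' : Fin (n + 1) → ℕ}, ltype r l ρ = ltype r l' ρ' →
      (PFm.Sat (Word.ofList l) φ ρ ↔ PFm.Sat (Word.ofList l') φ ρ')
  | _, .eq i j, _, _, _, _, _, _, h => by
      have h := (atomOf_eq_iff.mp (atomOf_eq_of_ltype_eq h)).1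
      simp only [PFm.Sat, le_antisymm_iff, h]
  | _, .lt i j, _, _, _, _, _, _, h => by
      have h := (atomOf_eq_iff.mp (atomOf_eq_of_ltype_eq h)).1
      simp only [PFm.Sat, ← not_le, h]
  | _, .letter a i, _, _, _, _, _, _, h => by
      simp only [PFm.Sat, Word.ofList, (atomOf_eq_iff.mp (atomOf_eq_of_ltype_eq h)).2 i]
  | _, .and φ ψ, _, hd, _, _, _, _, h => by
      simp only [PFm.depth, max_le_iff] at hd
      exact and_congr (sat_iff_of_ltype_eq φ hd.1 h) (sat_iff_of_ltype_eq ψ hd.2 h)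
  | _, .not φ, _, hd, _, _, _, _, h => not_congr (sat_iff_of_ltype_eq φ hd h)
  | _, .exlt ψ, 0, hd, _, _, _, _, _ => by simp [PFm.depth] at hd
  | _, .exlt ψ, r + 1, hd, _, _, _, _, h => by
      have hd : ψ.depth ≤ r := by simpa [PFm.depth] using hd
      obtain ⟨-, forth, back⟩ := ltype_succ_eq_iff.mp h
      simp only [PFm.Sat, Word.pos_ofList]
      constructor
      · rintro ⟨m, hm, hmρ, hψ⟩
        obtain ⟨m', hm', hm'ρ, e⟩ := forth m hm hmρ
        exact ⟨m', hm', hm'ρ, (sat_iff_of_ltype_eq ψ hd e).mp hψ⟩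
      · rintro ⟨m', hm', hm'ρ, hψ⟩
        obtain ⟨m, hm, hmρ, e⟩ := back m' hm' hm'ρ
        exact ⟨m, hm, hmρ, (sat_iff_of_ltype_eq ψ hd e).mpr hψ⟩

def PFm.conj {n : ℕ} (L : List (PFm A (n + 1))) : PFm A (n + 1) := L.foldr .and (.eq 0 0)

theorem PFm.sat_conj {w : Word A} {n : ℕ} {ρ : Fin (n + 1) → ℕ} (L : List (PFm A (n + 1))) :
    PFm.Sat w (PFm.conj L) ρ ↔ ∀ φ ∈ L, PFm.Sat w φ ρ := by
  induction L with
  | nil => simp [PFm.conj, PFm.Sat]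
  | cons φ L ih => simp [PFm.conj, PFm.Sat, ← ih]

theorem PFm.depth_conj_le {n r : ℕ} {L : List (PFm A (n + 1))} (h : ∀ φ ∈ L, φ.depth ≤ r) :
    (PFm.conj L).depth ≤ r := by
  induction L with
  | nil => simp [PFm.conj, PFm.depth]
  | cons φ L ih =>
    simp only [List.mem_cons, forall_eq_or_imp] at h
    exact max_le h.1 (ih h.2)

theorem exists_atom_hintikka {n : ℕ} (l : List A) (ρ : Fin (n + 1) → ℕ)
    (hρ : ∀ i, ρ i < l.length) :
    ∃ χ : PFm A (n + 1), χ.depth = 0 ∧ ∀ (l' : List A) (ρ' : Fin (n + 1) → ℕ),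
      (PFm.Sat (Word.ofList l') χ ρ' ↔ atomOf l' ρ' = atomOf l ρ) := by
  let idx := List.finRange (n + 1)
  let order : Fin (n + 1) × Fin (n + 1) → PFm A (n + 1) := fun ij =>
    if ρ ij.1 ≤ ρ ij.2 then .not (.lt ij.2 ij.1) else .lt ij.2 ij.1
  have sat_order (l' : List A) (ρ' : Fin (n + 1) → ℕ) (i j : Fin (n + 1)) :
      PFm.Sat (Word.ofList l') (order (i, j)) ρ' ↔ (ρ' i ≤ ρ' j ↔ ρ i ≤ ρ j) := by
    by_cases h : ρ i ≤ ρ j <;> simp [order, h, PFm.Sat]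
  refine ⟨.and (PFm.conj ((idx ×ˢ idx).map order))
      (PFm.conj (idx.map fun i => .letter (l[ρ i]'(hρ i)) i)), ?_, fun l' ρ' => ?_⟩
  · refine Nat.le_zero.mp (max_le (PFm.depth_conj_le ?_) (PFm.depth_conj_le ?_))
    · simp only [List.mem_map, forall_exists_index, and_imp]
      rintro _ ⟨i, j⟩ - rfl
      by_cases h : ρ i ≤ ρ j <;> simp [order, h, PFm.depth]
    · simp [PFm.depth]
  · simp only [PFm.Sat, PFm.sat_conj, List.forall_mem_map, idx, List.mem_product,
      List.mem_finRange, and_self, forall_const, Prod.forall, sat_order, atomOf_eq_iff,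
      Word.ofList, List.getElem?_eq_getElem (hρ _)]

theorem exists_hintikka (r : ℕ) : ∀ {n : ℕ} (l : List A) (ρ : Fin (n + 1) → ℕ),
    (∀ i, ρ i < l.length) → ∃ χ : PFm A (n + 1), χ.depth ≤ r ∧
      ∀ (l' : List A) (ρ' : Fin (n + 1) → ℕ),
        (PFm.Sat (Word.ofList l') χ ρ' ↔ ltype r l' ρ' = ltype r l ρ) := by
  induction r with
  | zero =>
    intro n l ρ hρ
    obtain ⟨χ, hd, hχ⟩ := exists_atom_hintikka l ρ hρ
    exact ⟨χ, hd.le, hχ⟩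
  | succ r ih =>
    intro n l ρ hρ
    obtain ⟨χ₀, hd₀, hχ₀⟩ := exists_atom_hintikka l ρ hρ
    choose χ hd hχ using fun m : Fin (min l.length (ρ 0)) =>
      ih l (Fin.snoc ρ m) (Fin.forall_fin_succ'.mpr
        ⟨by simpa using hρ, by simpa using (lt_min_iff.mp m.2).1⟩)
    let ms := List.finRange (min l.length (ρ 0))
    refine ⟨.and χ₀ (.and (.not (.exlt (PFm.conj (ms.map fun m => .not (χ m)))))
      (PFm.conj (ms.map fun m => .exlt (χ m)))), ?_, fun l' ρ' => ?_⟩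
    · have h₁ : ∀ φ ∈ ms.map fun m => PFm.exlt (χ m), φ.depth ≤ r + 1 := by
        simp [PFm.depth, hd]
      have h₂ : ∀ φ ∈ ms.map fun m => PFm.not (χ m), φ.depth ≤ r := by simp [PFm.depth, hd]
      have := PFm.depth_conj_le h₂
      simp only [PFm.depth, hd₀]
      exact max_le (Nat.zero_le _) (max_le (by omega) (PFm.depth_conj_le h₁))
    · rw [ltype_succ_eq_iff, ← hχ₀]
      simp only [PFm.Sat, PFm.sat_conj, List.forall_mem_map, ms, List.mem_finRange,
        forall_const, Word.pos_ofList, hχ, Fin.forall_iff, lt_min_iff, not_exists, not_and,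
        not_forall, not_not, exists_prop, and_imp]

def boundTypes (r : ℕ) (l : List A) : Set (LType A r 0) :=
  (fun m => ltype r l (fun _ => m)) '' Set.Iio l.length

theorem PSen.one_le_depth : ∀ s : PSen A, 1 ≤ s.depth
  | .exB _ => by simp [PSen.depth]
  | .and s _ => (PSen.one_le_depth s).trans (le_max_left _ _)
  | .not s => PSen.one_le_depth s

theorem tp_zero (w : Word A) : tp 0 w = ∅ :=
  Set.eq_empty_of_forall_notMem fun s hs => by
    have := PSen.one_le_depth s
    have := hs.1
    omega

theorem sat_exB_of_boundTypes_subset {r : ℕ} {l l' : List A}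
    (h : boundTypes r l ⊆ boundTypes r l') {φ : PFm A 1} (hφ : φ.depth ≤ r) :
    PSen.Sat (Word.ofList l) (.exB φ) → PSen.Sat (Word.ofList l') (.exB φ) := by
  rintro ⟨m, hm, hsat⟩
  obtain ⟨m', hm', e⟩ := h ⟨m, Word.pos_ofList.mp hm, rfl⟩
  exact ⟨m', Word.pos_ofList.mpr hm', (sat_iff_of_ltype_eq φ hφ e).mpr hsat⟩

theorem PSen.sat_iff_of_boundTypes_eq {r : ℕ} {l l' : List A}
    (h : boundTypes r l = boundTypes r l') :
    ∀ s : PSen A, s.depth ≤ r + 1 →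
      (PSen.Sat (Word.ofList l) s ↔ PSen.Sat (Word.ofList l') s)
  | .exB φ, hs => by
      have hφ : φ.depth ≤ r := by simpa [PSen.depth] using hs
      exact ⟨sat_exB_of_boundTypes_subset h.le hφ, sat_exB_of_boundTypes_subset h.ge hφ⟩
  | .and s t, hst => by
      simp only [PSen.depth, max_le_iff] at hst
      exact and_congr (sat_iff_of_boundTypes_eq h s hst.1) (sat_iff_of_boundTypes_eq h t hst.2)
  | .not s, hs => not_congr (sat_iff_of_boundTypes_eq h s hs)

theorem boundTypes_subset_of_tp_eq {r : ℕ} {l l' : List A}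
    (h : tp (r + 1) (Word.ofList l) = tp (r + 1) (Word.ofList l')) :
    boundTypes r l ⊆ boundTypes r l' := by
  rintro _ ⟨m, hm, rfl⟩
  obtain ⟨χ, hχd, hχ⟩ := exists_hintikka r l (fun _ => m) fun _ => hm
  have hmem : PSen.exB χ ∈ tp (r + 1) (Word.ofList l) :=
    ⟨by simpa [PSen.depth] using hχd, m, Word.pos_ofList.mpr hm, (hχ l _).mpr rfl⟩
  rw [h] at hmem
  obtain ⟨-, m', hm', hsat⟩ := hmem
  exact ⟨m', Word.pos_ofList.mp hm', (hχ l' _).mp hsat⟩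

theorem tp_succ_eq_iff {r : ℕ} {l l' : List A} :
    tp (r + 1) (Word.ofList l) = tp (r + 1) (Word.ofList l') ↔
      boundTypes r l = boundTypes r l' := by
  refine ⟨fun h => (boundTypes_subset_of_tp_eq h).antisymm (boundTypes_subset_of_tp_eq h.symm),
    fun h => ?_⟩
  ext s
  exact and_congr_right fun hs => PSen.sat_iff_of_boundTypes_eq h s hs

theorem atomOf_append_of_lt {u v : List A} {n : ℕ} {ρ : Fin n → ℕ}
    (h : ∀ i, ρ i < u.length) : atomOf (u ++ v) ρ = atomOf u ρ := by
  simp only [atomOf, List.getElem?_append_left (h _)]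

theorem ltype_append_of_lt (r : ℕ) : ∀ {n : ℕ} {u v : List A} {ρ : Fin (n + 1) → ℕ},
    (∀ i, ρ i < u.length) → ltype r (u ++ v) ρ = ltype r u ρ := by
  induction r with
  | zero =>
    intro n u v ρ h
    exact atomOf_append_of_lt h
  | succ r ih =>
    intro n u v ρ h
    have hmin : min (u ++ v).length (ρ 0) = min u.length (ρ 0) := by
      have := h 0
      simp only [List.length_append]
      omega
    simp only [ltype, atomOf_append_of_lt h, hmin]
    congr 1
    refine Set.image_congr fun m hm => ih (Fin.forall_fin_succ'.mpr ⟨by simpa using h, ?_⟩)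
    simp only [Set.mem_Iio, lt_min_iff] at hm
    simpa using hm.1

theorem atomOf_concat_eq_iff {p p' : List A} {c c' : A} {n : ℕ} {ρ ρ' : Fin (n + 1) → ℕ}
    (h₀ : ρ 0 = p.length) (h₀' : ρ' 0 = p'.length)
    (hρ : ∀ i, i ≠ 0 → ρ i < ρ 0) (hρ' : ∀ i, i ≠ 0 → ρ' i < ρ' 0) :
    atomOf (p ++ [c]) ρ = atomOf (p' ++ [c']) ρ' ↔ c = c' ∧ atomOf p ρ = atomOf p' ρ' := by
  have hp : ∀ i, i ≠ 0 → (p ++ [c])[ρ i]? = p[ρ i]? := fun i hi =>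
    List.getElem?_append_left (h₀ ▸ hρ i hi)
  have hp' : ∀ i, i ≠ 0 → (p' ++ [c'])[ρ' i]? = p'[ρ' i]? := fun i hi =>
    List.getElem?_append_left (h₀' ▸ hρ' i hi)
  simp only [atomOf_eq_iff]
  constructor
  · rintro ⟨hord, hlet⟩
    refine ⟨?_, hord, fun i => ?_⟩
    · simpa [h₀, h₀'] using hlet 0
    · rcases eq_or_ne i 0 with rfl | hi
      · simp [h₀, h₀']
      · rw [← hp i hi, ← hp' i hi, hlet]
  · rintro ⟨rfl, hord, hlet⟩
    refine ⟨hord, fun i => ?_⟩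
    rcases eq_or_ne i 0 with rfl | hi
    · simp [h₀, h₀']
    · rw [hp i hi, hp' i hi, hlet]

theorem ltype_concat_eq_iff (r : ℕ) : ∀ {n : ℕ} {p p' : List A} {c c' : A}
    {ρ ρ' : Fin (n + 1) → ℕ}, ρ 0 = p.length → ρ' 0 = p'.length →
    (∀ i, i ≠ 0 → ρ i < ρ 0) → (∀ i, i ≠ 0 → ρ' i < ρ' 0) →
    (ltype r (p ++ [c]) ρ = ltype r (p' ++ [c']) ρ' ↔ c = c' ∧ ltype r p ρ = ltype r p' ρ') := by
  induction r with
  | zero => exact atomOf_concat_eq_iff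
  | succ r ih =>
    intro n p p' c c' ρ ρ' h₀ h₀' hρ hρ'
    have key : ∀ m < ρ 0, ∀ m' < ρ' 0,
        (ltype r (p ++ [c]) (Fin.snoc ρ m) = ltype r (p' ++ [c']) (Fin.snoc ρ' m') ↔
          c = c' ∧ ltype r p (Fin.snoc ρ m) = ltype r p' (Fin.snoc ρ' m')) :=
      fun m hm m' hm' => ih (by simpa) (by simpa)
        (by simpa using forall_ne_zero_snoc (P := (· < ρ 0)) hρ hm)
        (by simpa using forall_ne_zero_snoc (P := (· < ρ' 0)) hρ' hm')
    simp only [ltype_succ_eq_iff, atomOf_concat_eq_iff h₀ h₀' hρ hρ', List.length_append,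
      List.length_singleton]
    constructor
    · rintro ⟨⟨rfl, ha⟩, forth, back⟩
      refine ⟨rfl, ha, fun m _ hmρ => ?_, fun m' _ hm'ρ => ?_⟩
      · obtain ⟨m', -, hm'ρ, e⟩ := forth m (by omega) hmρ
        exact ⟨m', by omega, hm'ρ, ((key m hmρ m' hm'ρ).mp e).2⟩
      · obtain ⟨m, -, hmρ, e⟩ := back m' (by omega) hm'ρ
        exact ⟨m, by omega, hmρ, ((key m hmρ m' hm'ρ).mp e).2⟩
    · rintro ⟨rfl, ha, forth, back⟩
      refine ⟨⟨rfl, ha⟩, fun m _ hmρ => ?_, fun m' _ hm'ρ => ?_⟩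
      · obtain ⟨m', -, hm'ρ, e⟩ := forth m (by omega) hmρ
        exact ⟨m', by omega, hm'ρ, (key m hmρ m' hm'ρ).mpr ⟨rfl, e⟩⟩
      · obtain ⟨m, -, hmρ, e⟩ := back m' (by omega) hm'ρ
        exact ⟨m, by omega, hmρ, (key m hmρ m' hm'ρ).mpr ⟨rfl, e⟩⟩

theorem ltype_comp (r : ℕ) : ∀ {n₁ n₂ : ℕ} {u u' : List A} {ρ ρ' : Fin (n₁ + 1) → ℕ}
    (h : Fin (n₂ + 1) → Fin (n₁ + 1)), h 0 = 0 →
    ltype r u ρ = ltype r u' ρ' → ltype r u (ρ ∘ h) = ltype r u' (ρ' ∘ h) := by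
  have atom {n₁ n₂ : ℕ} {u u' : List A} {ρ ρ' : Fin n₁ → ℕ} (h : Fin n₂ → Fin n₁)
      (e : atomOf u ρ = atomOf u' ρ') : atomOf u (ρ ∘ h) = atomOf u' (ρ' ∘ h) := by
    obtain ⟨hord, hlet⟩ := atomOf_eq_iff.mp e
    exact atomOf_eq_iff.mpr ⟨fun i j => hord (h i) (h j), fun i => hlet (h i)⟩
  induction r with
  | zero => exact fun h _ e => atom h e
  | succ r ih =>
    intro n₁ n₂ u u' ρ ρ' h h0 e
    have lift (σ : Fin (n₁ + 1) → ℕ) (m : ℕ) :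
        (Fin.snoc σ m : Fin (n₁ + 2) → ℕ) ∘ Fin.snoc (Fin.castSucc ∘ h) (Fin.last _) =
          Fin.snoc (σ ∘ h) m := by
      simp [Fin.comp_snoc, ← Function.comp_assoc]
    have lift0 :
        (Fin.snoc (Fin.castSucc ∘ h) (Fin.last _) : Fin (n₂ + 2) → Fin (n₁ + 2)) 0 = 0 := by
      simp [h0]
    obtain ⟨ha, forth, back⟩ := ltype_succ_eq_iff.mp e
    refine ltype_succ_eq_iff.mpr ⟨atom h ha, fun m hm hmρ => ?_, fun m' hm' hm'ρ => ?_⟩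
    · obtain ⟨m', hm', hm'ρ, e⟩ := forth m hm (by simpa [h0] using hmρ)
      exact ⟨m', hm', by simpa [h0] using hm'ρ, by simpa only [lift] using ih _ lift0 e⟩
    · obtain ⟨m, hm, hmρ, e⟩ := back m' hm' (by simpa [h0] using hm'ρ)
      exact ⟨m, hm, by simpa [h0] using hmρ, by simpa only [lift] using ih _ lift0 e⟩

/-- No quantifier can place a pebble on the bound, yet the resulting type is determined. -/
theorem ltype_snoc_bound {r : ℕ} {n : ℕ} {u u' : List A} {ρ ρ' : Fin (n + 1) → ℕ}
    (e : ltype r u ρ = ltype r u' ρ') :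
    ltype r u (Fin.snoc ρ (ρ 0)) = ltype r u' (Fin.snoc ρ' (ρ' 0)) := by
  simpa [Fin.comp_snoc] using ltype_comp r (Fin.snoc id 0 : Fin (n + 2) → Fin (n + 1)) (by simp) e

theorem ltype_eq_of_ltype_succ_eq (r : ℕ) : ∀ {n : ℕ} {u u' : List A}
    {ρ ρ' : Fin (n + 1) → ℕ}, ltype (r + 1) u ρ = ltype (r + 1) u' ρ' →
      ltype r u ρ = ltype r u' ρ' := by
  induction r with
  | zero => exact fun e => atomOf_eq_of_ltype_eq e
  | succ r ih =>
    intro n u u' ρ ρ' e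
    obtain ⟨ha, forth, back⟩ := ltype_succ_eq_iff.mp e
    refine ltype_succ_eq_iff.mpr ⟨ha, fun m hm hmρ => ?_, fun m' hm' hm'ρ => ?_⟩
    · obtain ⟨m', hm', hm'ρ, e⟩ := forth m hm hmρ
      exact ⟨m', hm', hm'ρ, ih e⟩
    · obtain ⟨m, hm, hmρ, e⟩ := back m' hm' hm'ρ
      exact ⟨m, hm, hmρ, ih e⟩

theorem atomOf_concat_update_eq {w w' : List A} (c : A) {n : ℕ} {σ σ' : Fin (n + 1) → ℕ}
    (h₀ : σ 0 = w.length) (h₀' : σ' 0 = w'.length)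
    (hσ : ∀ i, σ i ≤ σ 0) (hσ' : ∀ i, σ' i ≤ σ' 0) (e : atomOf w σ = atomOf w' σ') :
    atomOf (w ++ [c]) (Function.update σ 0 (w.length + 1)) =
      atomOf (w' ++ [c]) (Function.update σ' 0 (w'.length + 1)) := by
  obtain ⟨hord, hlet⟩ := atomOf_eq_iff.mp e
  refine atomOf_eq_iff.mpr ⟨fun i j => ?_, fun i => ?_⟩
  · have := hσ i; have := hσ j; have := hσ' i; have := hσ' j
    rcases eq_or_ne i 0 with rfl | hi <;> rcases eq_or_ne j 0 with rfl | hj <;>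
      simp [Function.update_of_ne, *] <;> omega
  · rcases eq_or_ne i 0 with rfl | hi
    · simp
    have hcase : σ i = σ 0 ↔ σ' i = σ' 0 := by
      rw [le_antisymm_iff, le_antisymm_iff, hord, hord]
    rcases (hσ i).lt_or_eq with hlt | heq
    · have hlt' : σ' i < σ' 0 := (hσ' i).lt_of_ne fun h => hlt.ne (hcase.mpr h)
      rw [h₀] at hlt; rw [h₀'] at hlt'
      simp [Function.update_of_ne hi, List.getElem?_append_left hlt,
        List.getElem?_append_left hlt', hlet]
    · have heq' := hcase.mp heq
      rw [h₀] at heq; rw [h₀'] at heq'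
      simp [Function.update_of_ne hi, heq, heq']

/-- Appending a letter `c` to `w`: the bound moves past `c`, and a pebble on `c`
corresponds to a pebble on the old bound `w.length`. -/
theorem ltype_concat_update_eq (r : ℕ) (c : A) : ∀ {n : ℕ} {w w' : List A}
    {σ σ' : Fin (n + 1) → ℕ}, σ 0 = w.length → σ' 0 = w'.length →
    (∀ i, σ i ≤ σ 0) → (∀ i, σ' i ≤ σ' 0) → ltype r w σ = ltype r w' σ' →
    ltype r (w ++ [c]) (Function.update σ 0 (w.length + 1)) =
      ltype r (w' ++ [c]) (Function.update σ' 0 (w'.length + 1)) := by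
  induction r with
  | zero => exact atomOf_concat_update_eq c
  | succ r ih =>
    have forth : ∀ {n : ℕ} {w w' : List A} {σ σ' : Fin (n + 1) → ℕ},
        σ 0 = w.length → σ' 0 = w'.length → (∀ i, σ i ≤ σ 0) → (∀ i, σ' i ≤ σ' 0) →
        ltype (r + 1) w σ = ltype (r + 1) w' σ' →
        ∀ m < (w ++ [c]).length, m < Function.update σ 0 (w.length + 1) 0 →
          ∃ m' < (w' ++ [c]).length, m' < Function.update σ' 0 (w'.length + 1) 0 ∧
            ltype r (w ++ [c]) (Fin.snoc (Function.update σ 0 (w.length + 1)) m) =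
              ltype r (w' ++ [c]) (Fin.snoc (Function.update σ' 0 (w'.length + 1)) m') := by
      intro n w w' σ σ' h₀ h₀' hσ hσ' e m hm _
      simp only [List.length_append, List.length_singleton, Function.update_self,
        Fin.snoc_update, Fin.castSucc_zero] at hm ⊢
      have extend {w : List A} {σ : Fin (n + 1) → ℕ} (h₀ : σ 0 = w.length)
          (hσ : ∀ i, σ i ≤ σ 0) {m : ℕ} (hm : m ≤ w.length) :
          ∀ i, (Fin.snoc σ m : Fin (n + 2) → ℕ) i ≤ (Fin.snoc σ m : Fin (n + 2) → ℕ) 0 :=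
        Fin.forall_fin_succ'.mpr ⟨by simpa using hσ, by simpa [h₀] using hm⟩
      rcases (Nat.lt_succ_iff.mp hm).lt_or_eq with hlt | rfl
      · obtain ⟨m', hm', hm'σ, e'⟩ := (ltype_succ_eq_iff.mp e).2.1 m (by omega) (by omega)
        exact ⟨m', by omega, by omega, ih (by simpa) (by simpa) (extend h₀ hσ hlt.le)
          (extend h₀' hσ' hm'.le) e'⟩
      · have e' := ltype_eq_of_ltype_succ_eq r (ltype_snoc_bound e)
        rw [h₀, h₀'] at e'
        exact ⟨w'.length, by omega, by omega, ih (by simpa) (by simpa) (extend h₀ hσ le_rfl)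
          (extend h₀' hσ' le_rfl) e'⟩
    intro n w w' σ σ' h₀ h₀' hσ hσ' e
    refine ltype_succ_eq_iff.mpr ⟨atomOf_concat_update_eq c h₀ h₀' hσ hσ'
      (atomOf_eq_of_ltype_eq e), forth h₀ h₀' hσ hσ' e, fun m' hm' hm'σ => ?_⟩
    obtain ⟨m, hm, hmσ, e'⟩ := forth h₀' h₀ hσ' hσ e.symm m' hm' hm'σ
    exact ⟨m, hm, hmσ, e'.symm⟩

/-- The bound sits just past the last position, so quantifiers range over all of `l`. -/
def endType (r : ℕ) (l : List A) : LType A r 0 := ltype r l (fun _ => l.length)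

theorem endType_concat {r : ℕ} {x y : List A} (c : A) (h : endType r x = endType r y) :
    endType r (x ++ [c]) = endType r (y ++ [c]) := by
  have hu (L : ℕ) : Function.update (fun _ : Fin 1 => L) 0 (L + 1) = fun _ => L + 1 :=
    funext fun i => by rw [Fin.fin_one_eq_zero i, Function.update_self]
  simpa only [endType, List.length_append, List.length_singleton, hu] using
    ltype_concat_update_eq r c (σ := fun _ => x.length) (σ' := fun _ => y.length)
      rfl rfl (fun _ => le_rfl) (fun _ => le_rfl) h

theorem ltype_concat_length_eq_iff {r : ℕ} {p p' : List A} {c c' : A} :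
    ltype r (p ++ [c]) (fun _ : Fin 1 => p.length) =
        ltype r (p' ++ [c']) (fun _ : Fin 1 => p'.length) ↔
      c = c' ∧ endType r p = endType r p' :=
  ltype_concat_eq_iff r rfl rfl (fun i hi => (hi (Fin.fin_one_eq_zero i)).elim)
    (fun i hi => (hi (Fin.fin_one_eq_zero i)).elim)

theorem boundTypes_eq_empty_iff {r : ℕ} {l : List A} : boundTypes r l = ∅ ↔ l = [] := by
  simp [boundTypes]

theorem boundTypes_mono (r : ℕ) (u v : List A) : boundTypes r u ⊆ boundTypes r (u ++ v) := by
  rintro _ ⟨m, hm, rfl⟩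
  exact ⟨m, by simp at hm ⊢; omega, ltype_append_of_lt r fun _ => hm⟩

theorem boundTypes_concat (r : ℕ) (x : List A) (c : A) :
    boundTypes r (x ++ [c]) = insert (ltype r (x ++ [c]) (fun _ => x.length)) (boundTypes r x) := by
  ext t
  simp only [boundTypes, Set.mem_image, Set.mem_Iio, Set.mem_insert_iff, List.length_append,
    List.length_singleton]
  constructor
  · rintro ⟨m, hm, rfl⟩
    rcases (Nat.lt_succ_iff.mp hm).lt_or_eq with hlt | rfl
    · exact Or.inr ⟨m, hlt, (ltype_append_of_lt r fun _ => hlt).symm⟩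
    · exact Or.inl rfl
  · rintro (rfl | ⟨m, hm, rfl⟩)
    · exact ⟨x.length, by omega, rfl⟩
    · exact ⟨m, by omega, ltype_append_of_lt r fun _ => hm⟩

theorem exists_boundTypes_append {r : ℕ} (z : List A) : ∀ {x y : List A},
    endType r x = endType r y → endType r (x ++ z) = endType r (y ++ z) ∧
      ∃ D, boundTypes r (x ++ z) = boundTypes r x ∪ D ∧
        boundTypes r (y ++ z) = boundTypes r y ∪ D := by
  induction z with
  | nil => exact fun h => ⟨by simpa, ∅, by simp, by simp⟩
  | cons c z ih =>
    intro x y h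
    obtain ⟨hend, D, hx, hy⟩ := ih (endType_concat c h)
    have hc := (ltype_concat_length_eq_iff (c := c)).mpr ⟨rfl, h⟩
    refine ⟨by simpa using hend, insert (ltype r (x ++ [c]) (fun _ => x.length)) D, ?_, ?_⟩
    · rw [← List.singleton_append, ← List.append_assoc, hx, boundTypes_concat,
        Set.insert_union, Set.union_insert]
    · rw [← List.singleton_append, ← List.append_assoc, hy, boundTypes_concat, hc,
        Set.insert_union, Set.union_insert]

theorem boundTypes_append_eq {r : ℕ} {x y : List A} (hb : boundTypes r x = boundTypes r y)
    (he : endType r x = endType r y) (z : List A) :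
    boundTypes r (x ++ z) = boundTypes r (y ++ z) := by
  obtain ⟨-, D, hx, hy⟩ := exists_boundTypes_append z he
  rw [hx, hy, hb]

theorem exists_append_eq_of_boundTypes_eq {r : ℕ} {w w' : List A}
    (h : boundTypes r w = boundTypes r w') :
    ∃ z, boundTypes r (w' ++ z) = boundTypes r w ∧ endType r (w' ++ z) = endType r w := by
  rcases List.eq_nil_or_concat' w' with rfl | ⟨p', c', rfl⟩
  · obtain rfl : w = [] := boundTypes_eq_empty_iff.mp (h.trans (boundTypes_eq_empty_iff.mpr rfl))
    exact ⟨[], rfl, rfl⟩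
  obtain ⟨m, hm : m < w.length, e⟩ : ltype r (p' ++ [c']) (fun _ => p'.length) ∈ boundTypes r w :=
    h ▸ ⟨p'.length, by simp, rfl⟩
  obtain ⟨p, c, z, rfl, rfl⟩ : ∃ p c z, w = p ++ [c] ++ z ∧ p.length = m :=
    ⟨w.take m, w[m]'hm, w.drop (m + 1), by rw [List.take_append_getElem, List.take_append_drop],
      List.length_take_of_le (le_of_lt hm)⟩
  dsimp only at e
  rw [ltype_append_of_lt r (fun _ => by simp), ltype_concat_length_eq_iff] at e
  obtain ⟨rfl, e⟩ := e
  obtain ⟨hend, D, h₁, h₂⟩ := exists_boundTypes_append z (endType_concat c e)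
  refine ⟨z, ?_, hend.symm⟩
  rw [h₂, ← h, h₁, Set.union_assoc, Set.union_self]

theorem exists_tp_append_eq {k : ℕ} {w w' : List A}
    (h : tp k (Word.ofList w) = tp k (Word.ofList w')) (v : List A) :
    ∃ v', tp k (Word.ofList (w' ++ v')) = tp k (Word.ofList (w ++ v)) := by
  cases k with
  | zero => exact ⟨v, by rw [tp_zero, tp_zero]⟩
  | succ r =>
    obtain ⟨z, hb, he⟩ := exists_append_eq_of_boundTypes_eq (tp_succ_eq_iff.mp h)
    refine ⟨z ++ v, tp_succ_eq_iff.mpr ?_⟩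
    rw [← List.append_assoc]
    exact boundTypes_append_eq hb he v

theorem tp_append_eq_of_tp_append_append_eq {k : ℕ} {u v z : List A}
    (h : tp k (Word.ofList (u ++ v ++ z)) = tp k (Word.ofList u)) :
    tp k (Word.ofList (u ++ v)) = tp k (Word.ofList u) := by
  cases k with
  | zero => rw [tp_zero, tp_zero]
  | succ r =>
    refine tp_succ_eq_iff.mpr (Set.Subset.antisymm ?_ (boundTypes_mono r u v))
    exact tp_succ_eq_iff.mp h ▸ boundTypes_mono r (u ++ v) z

end

theorem typeLe_partialOrder_general {A : Type} (k : ℕ) :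
    (∀ τ ∈ WTypes A k, typeLe k τ τ) ∧
    (∀ τ τ' τ'' : Set (PSen A), typeLe k τ τ' → typeLe k τ' τ'' → typeLe k τ τ'') ∧
    (∀ τ τ' : Set (PSen A), typeLe k τ τ' → typeLe k τ' τ → τ = τ') ∧
    (∀ τ ∈ WTypes A k, typeLe k (tp k (Word.ofList ([] : List A))) τ) := by
  refine ⟨?_, ?_, ?_, ?_⟩
  · rintro τ ⟨l, rfl⟩
    exact ⟨l, [], rfl, by rw [List.append_nil]⟩
  · rintro τ τ' τ'' ⟨x, y, rfl, hxy⟩ ⟨u, v, hu, rfl⟩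
    obtain ⟨v', hv'⟩ := exists_tp_append_eq (hu.trans hxy.symm) v
    exact ⟨x, y ++ v', rfl, by rw [← List.append_assoc, hv']⟩
  · rintro τ τ' ⟨u, v, rfl, rfl⟩ ⟨u', v', hu', huv'⟩
    obtain ⟨z, hz⟩ := exists_tp_append_eq hu' v'
    exact (tp_append_eq_of_tp_append_append_eq (hz.trans huv')).symm
  · rintro τ ⟨l, rfl⟩
    exact ⟨[], l, rfl, rfl⟩

/-- The relation `⪯` is a partial order on `Types_k`
(reflexive, transitive and antisymmetric), whose minimum is the type of the
empty word. -/
theorem typeLe_partialOrder {A : Type} [Finite A] (k : ℕ) :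
    (∀ τ ∈ WTypes A k, typeLe k τ τ) ∧
    (∀ τ τ' τ'' : Set (PSen A), typeLe k τ τ' → typeLe k τ' τ'' → typeLe k τ τ'') ∧
    (∀ τ τ' : Set (PSen A), typeLe k τ τ' → typeLe k τ' τ → τ = τ') ∧
    (∀ τ ∈ WTypes A k, typeLe k (tp k (Word.ofList ([] : List A))) τ) :=
  typeLe_partialOrder_general k

end PrefSynth
end

section
/- For every k ∈ ℕ there exists f_E ∈ ℕ (one may take f_E = k·|Types_k|^h, where h is the height of tp_k(ε) in (Types_k, ⪯)) such that for every n_S ∈ ℕ, every n_E ≥ f_E, and every prefFO^dw sentence φ of quantifier depth k: if the pair (n_S, n_E+1) is winning for System in the token game for φ, then the pair (n_S, n_E) is winning for System in the token game for φ. -/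
set_option maxHeartbeats 1000000

/-!
System, holding a winning strategy `σ` for one Environment token more, plays `σ` against the
real tokens together with an extra Environment token that it simulates itself. With `M` types,
the extra token follows crowds: it steps from the last type of its path `p` to `τ` only when at
least `k (M + 1) ^ (M - |p|)` real tokens have visited exactly the types of `p` and then `τ`.
This keeps at least `k (M + 1) ^ (M + 1 - |p|)` real tokens following `p`; at the start all
`n_E ≥ k (M + 1) ^ M` of them do. Since `σ` wins, no token can be made to revisit a type (it
could then cycle forever and the play would not stabilize), so the path has at most `M` types.
Once the play has stabilized the extra token is stuck, so fewer than `k (M + 1) ^ (M - |p|)`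
followers left its type towards each of the at most `M` others, and at least `k` real tokens
share its type. There the extra token does not change the `k`-counting function of the limit
configuration.
-/

namespace List

variable {α : Type*}

section Destutter

variable (R : α → α → Prop) [DecidableRel R]

theorem destutter'_append_singleton (a x : α) (l : List α) :
    (l ++ [x]).destutter' R a =
      if ∀ y ∈ (l.destutter' R a).getLast?, R y x then l.destutter' R a ++ [x]
      else l.destutter' R a := by
  induction l generalizing a with
  | nil => by_cases h : R a x <;> simp [h]
  | cons b l ih =>
    by_cases h : R a b
    · simp only [cons_append, destutter'_cons_pos _ h, ih,
        getLast?_cons_of_ne_nil (destutter'_ne_nil _ _)]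
      split <;> simp
    · simp only [cons_append, destutter'_cons_neg _ h, ih]

theorem destutter_append_singleton (l : List α) (x : α) :
    (l ++ [x]).destutter R =
      if ∀ y ∈ (l.destutter R).getLast?, R y x then l.destutter R ++ [x]
      else l.destutter R := by
  cases l with
  | nil => simp
  | cons a l => rw [cons_append, destutter_cons', destutter_cons', destutter'_append_singleton]

theorem destutter_prefix_destutter_append (l₁ l₂ : List α) :
    l₁.destutter R <+: (l₁ ++ l₂).destutter R := by
  induction l₂ using reverseRecOn with
  | nil => simp
  | append_singleton l₂ x ih =>
    rw [← append_assoc, destutter_append_singleton]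
    split
    · exact ih.trans (prefix_append _ _)
    · exact ih

end Destutter

theorem getLast?_eq_some_getLastD {l : List α} (hl : l ≠ []) (d : α) :
    l.getLast? = some (l.getLastD d) := by
  rw [getLastD_eq_getLast?, getLast?_eq_some_getLast hl, Option.getD_some]

theorem getLast?_destutter_ne [DecidableEq α] (l : List α) :
    (l.destutter (· ≠ ·)).getLast? = l.getLast? := by
  induction l using reverseRecOn with
  | nil => simp
  | append_singleton l x ih =>
    rw [destutter_append_singleton, getLast?_concat]
    split
    · exact getLast?_concat
    · next h =>
      push Not at h
      obtain ⟨y, hy, rfl⟩ := h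
      rw [← hy, ih]

theorem IsChain.destutter_ne [DecidableEq α] {R : α → α → Prop} {l : List α}
    (hl : l.IsChain R) :
    (l.destutter (· ≠ ·)).IsChain fun a b => R a b ∧ a ≠ b := by
  induction l using reverseRecOn with
  | nil => simp
  | append_singleton l x ih =>
    rw [isChain_append] at hl
    rw [destutter_append_singleton]
    split
    · next hne =>
      refine isChain_append.2 ⟨ih hl.1, isChain_singleton x, fun y hy z hz => ?_⟩
      obtain rfl : z = x := by simpa using hz.symm
      rw [getLast?_destutter_ne] at hy
      exact ⟨hl.2.2 y hy z (by simp), hne y (by rwa [getLast?_destutter_ne])⟩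
    · exact ih hl.1

/-- Going around the loop of a repetition turns a chain into an infinite one. -/
theorem IsChain.exists_seq_of_not_nodup {R : α → α → Prop} {l : List α} (hl : l.IsChain R)
    (hnd : ¬l.Nodup) : ∃ f : ℕ → α, f 0 ∈ l.head? ∧ ∀ n, R (f n) (f (n + 1)) := by
  obtain ⟨i, j, hi, hj, hij, hrep⟩ : ∃ i j, ∃ (hi : i < l.length) (hj : j < l.length),
      i < j ∧ l[i] = l[j] := by
    simpa [Nodup, pairwise_iff_getElem] using hnd
  let g : ℕ → ℕ := fun n => n.rec 0 fun _ g => if g + 1 < j then g + 1 else i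
  have hg : ∀ n, g n < j := fun n => by
    induction n with
    | zero => exact Nat.zero_lt_of_lt hij
    | succ n ih => dsimp only [g]; split <;> assumption
  refine ⟨fun n => l[g n]'((hg n).trans hj), by simp [g, head?_eq_getElem?], fun n => ?_⟩
  have hstep := isChain_iff_getElem.1 hl
  by_cases hn : g n + 1 < j
  · simpa [g, hn] using hstep (g n) (by omega)
  · have hj' : g n + 1 = j := by have := hg n; omega
    simpa [g, hn, hrep, hj'] using hstep (g n) (hj' ▸ hj)

theorem le_card_eq_of_card_prefix {β : Type*} [Finite α] [Finite β] (l : β → List α)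
    (p : List α) {θ : ℕ} (hall : (Nat.card α + 1) * θ ≤ Nat.card {b // p <+: l b})
    (hext : ∀ a, Nat.card {b // p ++ [a] <+: l b} < θ) : θ ≤ Nat.card {b // l b = p} := by
  classical
  have := Fintype.ofFinite α
  have := Fintype.ofFinite β
  simp only [Nat.card_eq_fintype_card, Fintype.card_subtype] at hall hext ⊢
  have hcover : ({b | p <+: l b} : Finset β) ⊆
      ({b | l b = p} : Finset β) ∪
        Finset.univ.biUnion fun a => ({b | p ++ [a] <+: l b} : Finset β) := by
    intro b hb
    obtain ⟨_ | ⟨a, s⟩, hs⟩ := (Finset.mem_filter.1 hb).2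
    · simp [← hs]
    · simp only [Finset.mem_union, Finset.mem_filter, Finset.mem_univ, true_and,
        Finset.mem_biUnion]
      exact .inr ⟨a, s, by simpa using hs⟩
  have hsum : (Finset.univ.biUnion fun a => ({b | p ++ [a] <+: l b} : Finset β)).card ≤
      Fintype.card α * (θ - 1) := by
    refine Finset.card_biUnion_le.trans ?_
    simpa using Finset.sum_le_card_nsmul Finset.univ _ (θ - 1) fun a _ =>
      Nat.le_sub_one_of_lt (hext a)
  have := (Finset.card_le_card hcover).trans (Finset.card_union_le _ _)
  have : Fintype.card α * (θ - 1) ≤ Fintype.card α * θ :=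
    Nat.mul_le_mul_left _ (Nat.sub_le _ _)
  linarith

end List

namespace PrefSynth

section FiniteTypes

variable {A : Type}

abbrev AtomicProfile (A : Type) (n : ℕ) : Type :=
  (Fin (n + 1) → Fin (n + 1) → Prop) × (Fin (n + 1) → Fin (n + 1) → Prop) ×
    (Fin (n + 1) → Option A)

/-- Hintikka-style profiles: the rank-`k` profile of a tuple records its atomic type and the set
of rank-`(k-1)` profiles of its extensions by a position below its first (bounding) entry. -/
def Profile (A : Type) : ℕ → ℕ → Type
  | 0, n => AtomicProfile A n
  | k + 1, n => AtomicProfile A n × Set (Profile A k (n + 1))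

instance Profile.finite [Finite A] : ∀ k n, Finite (Profile A k n)
  | 0, n => inferInstanceAs (Finite (AtomicProfile A n))
  | k + 1, n =>
    have := Profile.finite k (n + 1)
    inferInstanceAs (Finite (AtomicProfile A n × Set (Profile A k (n + 1))))

def atomicProfile (w : Word A) {n : ℕ} (ρ : Fin (n + 1) → ℕ) : AtomicProfile A n :=
  (fun i j => ρ i = ρ j, fun i j => ρ i < ρ j, fun i => w (ρ i))

def profile (w : Word A) : (k n : ℕ) → (Fin (n + 1) → ℕ) → Profile A k n
  | 0, _, ρ => atomicProfile w ρ
  | k + 1, n, ρ =>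
    (atomicProfile w ρ,
      {c | ∃ m, Word.pos w m ∧ m < ρ 0 ∧ c = profile w k (n + 1) (Fin.snoc ρ m)})

theorem atomicProfile_eq_of_profile_eq {w w' : Word A} {k n : ℕ} {ρ ρ' : Fin (n + 1) → ℕ}
    (h : profile w k n ρ = profile w' k n ρ') : atomicProfile w ρ = atomicProfile w' ρ' := by
  cases k with
  | zero => exact h
  | succ k => exact congrArg Prod.fst h

theorem PFm.sat_iff_of_profile_eq {w w' : Word A} :
    {n : ℕ} → (φ : PFm A (n + 1)) → {k : ℕ} → φ.depth ≤ k →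
    {ρ ρ' : Fin (n + 1) → ℕ} →
    profile w k n ρ = profile w' k n ρ' → (PFm.Sat w φ ρ ↔ PFm.Sat w' φ ρ')
  | _, .eq i j, _, _, _, _, h =>
    iff_of_eq (congrArg (fun c => c.1 i j) (atomicProfile_eq_of_profile_eq h))
  | _, .lt i j, _, _, _, _, h =>
    iff_of_eq (congrArg (fun c => c.2.1 i j) (atomicProfile_eq_of_profile_eq h))
  | _, .letter a i, _, _, _, _, h =>
    iff_of_eq (congrArg (fun c : AtomicProfile A _ => c.2.2 i = some a)
      (atomicProfile_eq_of_profile_eq h))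
  | _, .and φ ψ, _, hd, _, _, h => by
    simp only [PFm.depth, max_le_iff] at hd
    simp only [PFm.Sat, sat_iff_of_profile_eq φ hd.1 h, sat_iff_of_profile_eq ψ hd.2 h]
  | _, .not φ, _, hd, _, _, h => by
    simp only [PFm.Sat, sat_iff_of_profile_eq φ hd h]
  | n, .exlt φ, k + 1, hd, ρ, ρ', h => by
    have hd : φ.depth ≤ k := Nat.le_of_succ_le_succ hd
    have hset := congrArg Prod.snd h
    simp only [profile] at hset
    simp only [PFm.Sat]
    constructor
    · rintro ⟨m, hm, hlt, hsat⟩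
      obtain ⟨m', hm', hlt', heq⟩ := (Set.ext_iff.1 hset _).1 ⟨m, hm, hlt, rfl⟩
      exact ⟨m', hm', hlt', (sat_iff_of_profile_eq φ hd heq).1 hsat⟩
    · rintro ⟨m', hm', hlt', hsat⟩
      obtain ⟨m, hm, hlt, heq⟩ := (Set.ext_iff.1 hset _).2 ⟨m', hm', hlt', rfl⟩
      exact ⟨m, hm, hlt, (sat_iff_of_profile_eq φ hd heq).1 hsat⟩

def wordProfile (k : ℕ) (w : Word A) : Set (Profile A k 0) :=
  {c | ∃ m, Word.pos w m ∧ c = profile w k 0 fun _ => m}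

theorem PSen.sat_iff_of_wordProfile_eq {k : ℕ} {w w' : Word A}
    (h : wordProfile k w = wordProfile k w') (s : PSen A) (hd : s.depth ≤ k) :
    PSen.Sat w s ↔ PSen.Sat w' s := by
  induction s with
  | exB φ =>
    have hd : φ.depth ≤ k := Nat.le_of_succ_le hd
    simp only [PSen.Sat]
    constructor
    · rintro ⟨m, hm, hsat⟩
      obtain ⟨m', hm', heq⟩ := (Set.ext_iff.1 h _).1 ⟨m, hm, rfl⟩
      exact ⟨m', hm', (φ.sat_iff_of_profile_eq hd heq).1 hsat⟩
    · rintro ⟨m', hm', hsat⟩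
      obtain ⟨m, hm, heq⟩ := (Set.ext_iff.1 h _).2 ⟨m', hm', rfl⟩
      exact ⟨m, hm, (φ.sat_iff_of_profile_eq hd heq).1 hsat⟩
  | and s t ihs iht =>
    simp only [PSen.depth, max_le_iff] at hd
    simp only [PSen.Sat, ihs hd.1, iht hd.2]
  | not s ih => simp only [PSen.Sat, ih hd]

theorem tp_eq_of_wordProfile_eq {k : ℕ} {w w' : Word A}
    (h : wordProfile k w = wordProfile k w') : tp k w = tp k w' :=
  Set.ext fun s => and_congr_right fun hd => PSen.sat_iff_of_wordProfile_eq h s hd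

instance Typ.finite [Finite A] (k : ℕ) : Finite (Typ A k) :=
  Finite.of_injective (fun τ : Typ A k => wordProfile k (Word.ofList τ.2.choose)) fun τ τ' h =>
    Subtype.ext <| by rw [τ.2.choose_spec, τ'.2.choose_spec]; exact tp_eq_of_wordProfile_eq h

end FiniteTypes

section Arena

variable {C : Type} {k : ℕ} {TS TE : Type}

theorem typLe_refl (τ : Typ C k) : typLe τ τ := by
  obtain ⟨_, l, rfl⟩ := τ
  exact ⟨l, [], rfl, by simp⟩

def typStep (τ τ' : Typ C k) : Prop := typLe τ τ' ∧ τ ≠ τ'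

/-- System follows `σ` while Environment moves its tokens on a fixed schedule: after
Environment's `j`-th move the token `t` is on `e j t`. -/
noncomputable def playAgainst (σ : TokStrat C k TS TE) (e : ℕ → TE → Typ C k) :
    ℕ → Conf C k TS TE
  | 0 => fun _ => initTyp C k
  | n + 1 => Sum.elim
      (if Even n then fun s => playAgainst σ e n (.inl s)
        else σ (List.ofFn fun i : Fin (n + 1) => playAgainst σ e i))
      (e ((n + 2) / 2))
decreasing_by all_goals omega

variable {σ : TokStrat C k TS TE} {e : ℕ → TE → Typ C k}

theorem playAgainst_inr (he0 : ∀ t, e 0 t = initTyp C k) (n : ℕ) (t : TE) :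
    playAgainst σ e n (.inr t) = e ((n + 1) / 2) t := by
  cases n with
  | zero => rw [playAgainst]; exact (he0 t).symm
  | succ n => rw [playAgainst]; rfl

theorem isPlay_playAgainst (hσ : StratLegal σ) (he0 : ∀ t, e 0 t = initTyp C k)
    (he : ∀ j t, typLe (e j t) (e (j + 1) t)) : IsPlay (playAgainst σ e) := by
  refine ⟨fun _ => by rw [playAgainst], fun n x => ?_, fun n hn s => ?_, fun n hn t => ?_⟩
  · rcases x with s | t
    · rw [playAgainst]
      split_ifs with hn
      · exact typLe_refl _
      · have := hσ (List.ofFn fun i : Fin (n + 1) => playAgainst σ e i) (by simp) s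
        simpa [List.getLast_ofFn] using this
    · rw [playAgainst_inr he0, playAgainst_inr he0]
      rcases Nat.even_or_odd n with ⟨m, rfl⟩ | ⟨m, rfl⟩
      · simpa [show (m + m + 1 + 1) / 2 = m + 1 by omega, show (m + m + 1) / 2 = m by omega]
          using he m t
      · simpa [show (2 * m + 1 + 1 + 1) / 2 = m + 1 by omega,
          show (2 * m + 1 + 1) / 2 = m + 1 by omega] using typLe_refl (e (m + 1) t)
  · rw [playAgainst]; simp [hn]
  · rw [playAgainst_inr he0, playAgainst_inr he0]
    obtain ⟨m, rfl⟩ := Nat.not_even_iff_odd.1 hn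
    congr 1
    omega

theorem compatibleTok_playAgainst : CompatibleTok σ (playAgainst σ e) := by
  intro n hn s
  rw [playAgainst]
  simp [hn]

end Arena

section NoCycle

variable {A B : Type} {k : ℕ} {TS TE : Type} {φ : PDW A B 0 0 0}
  {σ : TokStrat (A ⊕ B) k TS TE}

theorem TokWinning.exists_stable_schedule (hσ : StratLegal σ) (hwin : TokWinning φ σ)
    {e : ℕ → TE → Typ (A ⊕ B) k} (he0 : ∀ t, e 0 t = initTyp (A ⊕ B) k)
    (he : ∀ j t, typLe (e j t) (e (j + 1) t)) : ∃ N, ∀ j, N ≤ j → e j = e N := by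
  obtain ⟨N, hN, -⟩ := hwin _ (isPlay_playAgainst hσ he0 he) compatibleTok_playAgainst
  have hsched : ∀ j, N ≤ j → e j = e ((N + 1) / 2) := fun j hj => funext fun t => by
    have := congrFun (hN (2 * j) (by omega)) (.inr t)
    rwa [playAgainst_inr he0, playAgainst_inr he0, show (2 * j + 1) / 2 = j by omega] at this
  exact ⟨N, fun j hj => (hsched j hj).trans (hsched N le_rfl).symm⟩

/-- Against a winning strategy, Environment cannot walk its tokens around a cycle forever. -/
theorem TokWinning.nodup_of_isChain [Nonempty TE] (hσ : StratLegal σ) (hwin : TokWinning φ σ)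
    {p : List (Typ (A ⊕ B) k)} (hp : p.IsChain typStep)
    (hhead : p.head? = some (initTyp (A ⊕ B) k)) : p.Nodup := by
  by_contra hnd
  obtain ⟨f, hf0, hf⟩ := hp.exists_seq_of_not_nodup hnd
  obtain ⟨N, hN⟩ := hwin.exists_stable_schedule hσ (e := fun j _ => f j)
    (fun _ => by simpa [hhead, eq_comm] using hf0) (fun j _ => (hf j).1)
  exact (hf N).2 (congrFun (hN (N + 1) N.le_succ) (Classical.arbitrary TE)).symm

end NoCycle

section ExtraToken

open Classical

variable {C : Type} {k : ℕ} {TS TE : Type}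

noncomputable def trajectory (h : List (Conf C k TS TE)) (t : TE) : List (Typ C k) :=
  (h.map (· (.inr t))).destutter (· ≠ ·)

noncomputable def followers (h : List (Conf C k TS TE)) (p : List (Typ C k)) : ℕ :=
  Nat.card {t : TE // p <+: trajectory h t}

/-- The demand drops by a factor `M + 1` (`M` the number of types) per step of the path: the
followers of a path either stay on it or leave it towards one of at most `M` types. -/
noncomputable def demand (C : Type) (k ℓ : ℕ) : ℕ :=
  k * (Nat.card (Typ C k) + 1) ^ (Nat.card (Typ C k) + 1 - ℓ)

/-- Histories of even length are those ending with an Environment move. -/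
def CanAdvance (h : List (Conf C k TS TE)) (p : List (Typ C k)) (τ : Typ C k) : Prop :=
  Even h.length ∧ typStep (p.getLastD (initTyp C k)) τ ∧
    demand C k (p.length + 1) ≤ followers h (p ++ [τ])

noncomputable def advance (h : List (Conf C k TS TE)) (p : List (Typ C k)) : List (Typ C k) :=
  if hτ : ∃ τ, CanAdvance h p τ then p ++ [hτ.choose] else p

noncomputable def extraPathRev : List (Conf C k TS TE) → List (Typ C k)
  | [] => [initTyp C k]
  | c :: h => advance (c :: h).reverse (extraPathRev h)

noncomputable def extraPath (h : List (Conf C k TS TE)) : List (Typ C k) :=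
  extraPathRev h.reverse

noncomputable def extraPos (h : List (Conf C k TS TE)) : Typ C k :=
  (extraPath h).getLastD (initTyp C k)

theorem advance_eq_or (h : List (Conf C k TS TE)) (p : List (Typ C k)) :
    advance h p = p ∨ ∃ τ, CanAdvance h p τ ∧ advance h p = p ++ [τ] := by
  unfold advance
  split
  · next hτ => exact .inr ⟨_, hτ.choose_spec, rfl⟩
  · exact .inl rfl

theorem advance_eq_self_iff {h : List (Conf C k TS TE)} {p : List (Typ C k)} :
    advance h p = p ↔ ¬∃ τ, CanAdvance h p τ := by
  unfold advance
  split
  · next hτ => simpa using hτ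
  · next hτ => simpa using hτ

theorem extraPath_append_singleton (h : List (Conf C k TS TE)) (c : Conf C k TS TE) :
    extraPath (h ++ [c]) = advance (h ++ [c]) (extraPath h) := by
  simp [extraPath, extraPathRev]

theorem extraPath_induction {P : List (Typ C k) → Prop} (hinit : P [initTyp C k])
    (hstep : ∀ (h : List (Conf C k TS TE)) p τ, P p → CanAdvance h p τ → P (p ++ [τ]))
    (h : List (Conf C k TS TE)) :
    P (extraPath h) := by
  induction h using List.reverseRecOn with
  | nil => exact hinit
  | append_singleton h c ih =>
    rw [extraPath_append_singleton]
    rcases advance_eq_or (h ++ [c]) (extraPath h) with heq | ⟨τ, hτ, heq⟩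
    · rwa [heq]
    · rw [heq]; exact hstep _ _ _ ih hτ

theorem head?_extraPath (h : List (Conf C k TS TE)) :
    (extraPath h).head? = some (initTyp C k) :=
  extraPath_induction (P := fun p => p.head? = some (initTyp C k)) rfl
    (fun _ p _ hp _ => by cases p <;> simp_all) h

theorem extraPath_ne_nil (h : List (Conf C k TS TE)) : extraPath h ≠ [] := by
  simpa using congrArg Option.isSome (head?_extraPath h)

theorem isChain_extraPath (h : List (Conf C k TS TE)) : (extraPath h).IsChain typStep := by
  refine extraPath_induction (List.isChain_singleton _) (fun _ p τ hp hτ => ?_) h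
  refine List.isChain_append.2 ⟨hp, List.isChain_singleton τ, fun x hx y hy => ?_⟩
  obtain rfl : y = τ := by simpa using hy.symm
  have : x = p.getLastD (initTyp C k) := by simp_all
  exact this ▸ hτ.2.1

theorem extraPath_append_singleton_of_odd (h : List (Conf C k TS TE)) (c : Conf C k TS TE)
    (hodd : ¬Even (h ++ [c]).length) : extraPath (h ++ [c]) = extraPath h := by
  rw [extraPath_append_singleton, advance_eq_self_iff]
  exact fun ⟨_, heven, _⟩ => hodd heven

theorem typLe_extraPos_append_singleton (h : List (Conf C k TS TE)) (c : Conf C k TS TE) :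
    typLe (extraPos h) (extraPos (h ++ [c])) := by
  unfold extraPos
  rw [extraPath_append_singleton]
  rcases advance_eq_or (h ++ [c]) (extraPath h) with heq | ⟨τ, hτ, heq⟩
  · rw [heq]; exact typLe_refl _
  · rw [heq, List.getLastD_concat]; exact hτ.2.1.1

theorem extraPath_append_singleton_of_extraPos_eq (h : List (Conf C k TS TE))
    (c : Conf C k TS TE) (hpos : extraPos (h ++ [c]) = extraPos h) :
    extraPath (h ++ [c]) = extraPath h := by
  unfold extraPos at hpos
  rw [extraPath_append_singleton] at hpos ⊢
  rcases advance_eq_or (h ++ [c]) (extraPath h) with heq | ⟨τ, hτ, heq⟩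
  · exact heq
  · rw [heq, List.getLastD_concat] at hpos
    exact absurd hpos.symm hτ.2.1.2

theorem followers_le_followers_append (h : List (Conf C k TS TE)) (c : Conf C k TS TE)
    (p : List (Typ C k)) [Finite TE] : followers h p ≤ followers (h ++ [c]) p :=
  Nat.card_mono (Set.toFinite _) fun t ht => List.IsPrefix.trans ht <| by
    simpa [trajectory] using List.destutter_prefix_destutter_append _ _ _

theorem extraPath_singleton (c : Conf C k TS TE) : extraPath [c] = [initTyp C k] :=
  extraPath_append_singleton_of_odd [] c (by simp)

end ExtraToken

section Lift

variable {C : Type} {k : ℕ} {TS TE : Type}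

def playHist (conf : ℕ → Conf C k TS TE) (n : ℕ) : List (Conf C k TS TE) :=
  List.ofFn fun i : Fin n => conf i

@[simp] theorem length_playHist (conf : ℕ → Conf C k TS TE) (n : ℕ) :
    (playHist conf n).length = n := by
  simp [playHist]

theorem playHist_succ (conf : ℕ → Conf C k TS TE) (n : ℕ) :
    playHist conf (n + 1) = playHist conf n ++ [conf n] := by
  rw [playHist, List.ofFn_succ_last]
  rfl

@[simp] theorem getElem_playHist (conf : ℕ → Conf C k TS TE) {n i : ℕ}
    (hi : i < (playHist conf n).length) :
    (playHist conf n)[i] = conf i := by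
  simp [playHist]

theorem take_playHist (conf : ℕ → Conf C k TS TE) {i n : ℕ} (hin : i ≤ n) :
    (playHist conf n).take i = playHist conf i :=
  List.ext_getElem (by simp [hin]) fun j _ _ => by simp [playHist]

def withExtra (c : Conf C k TS TE) (τ : Typ C k) : Conf C k TS (Option TE)
  | .inl s => c (.inl s)
  | .inr none => τ
  | .inr (some t) => c (.inr t)

noncomputable def liftHist (h : List (Conf C k TS TE)) : List (Conf C k TS (Option TE)) :=
  List.ofFn fun i : Fin h.length => withExtra h[i] (extraPos (h.take (i + 1)))

noncomputable def liftPlay (conf : ℕ → Conf C k TS TE) (n : ℕ) : Conf C k TS (Option TE) :=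
  withExtra (conf n) (extraPos (playHist conf (n + 1)))

@[simp] theorem length_liftHist (h : List (Conf C k TS TE)) :
    (liftHist h).length = h.length := by
  simp [liftHist]

theorem getElem_liftHist (h : List (Conf C k TS TE)) {i : ℕ} (hi : i < (liftHist h).length) :
    (liftHist h)[i] = withExtra (h[i]'(by simpa using hi)) (extraPos (h.take (i + 1))) := by
  simp [liftHist]

theorem liftHist_playHist (conf : ℕ → Conf C k TS TE) (n : ℕ) :
    liftHist (playHist conf n) = playHist (liftPlay conf) n :=
  List.ext_getElem (by simp) fun i hi _ => by
    rw [getElem_liftHist, take_playHist conf (by simpa using hi), getElem_playHist,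
      getElem_playHist]
    rfl

theorem stratLegal_liftHist {σ : TokStrat C k TS (Option TE)} (hσ : StratLegal σ) :
    StratLegal fun h => σ (liftHist h) := by
  intro h hne s
  have hne' : liftHist h ≠ [] := by simpa [liftHist] using hne
  convert hσ (liftHist h) hne' s using 1
  simp only [List.getLast_eq_getElem, getElem_liftHist, length_liftHist]
  rfl

theorem isPlay_liftPlay {conf : ℕ → Conf C k TS TE} (hplay : IsPlay conf) :
    IsPlay (liftPlay conf) := by
  obtain ⟨hinit, hstep, hS, hE⟩ := hplay
  refine ⟨?_, fun n x => ?_, fun n hn s => hS n hn s, fun n hn x => ?_⟩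
  · rintro (s | _ | t)
    · exact hinit (.inl s)
    · simp [liftPlay, withExtra, playHist, extraPos, extraPath_singleton]
    · exact hinit (.inr t)
  · rcases x with s | _ | t
    · exact hstep n (.inl s)
    · simpa [liftPlay, withExtra, playHist_succ conf (n + 1)]
        using typLe_extraPos_append_singleton (playHist conf (n + 1)) (conf (n + 1))
    · exact hstep n (.inr t)
  · rcases x with _ | t
    · simp only [liftPlay, withExtra, extraPos, playHist_succ conf (n + 1)]
      rw [extraPath_append_singleton_of_odd]
      simpa [Nat.even_add_one, ← playHist_succ] using hn
    · exact hE n hn t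

theorem compatibleTok_liftPlay {σ : TokStrat C k TS (Option TE)} {conf : ℕ → Conf C k TS TE}
    (hcompat : CompatibleTok (fun h => σ (liftHist h)) conf) :
    CompatibleTok σ (liftPlay conf) := by
  intro n hn s
  change conf (n + 1) (.inl s) = σ (playHist (liftPlay conf) (n + 1)) s
  rw [← liftHist_playHist]
  exact hcompat n hn s

end Lift

section Count

variable {C : Type} {k : ℕ} {TS TE : Type}

def withExtraEmb (c : Conf C k TS TE) (τ τ' : Typ C k) :
    {x // c x = τ'} → {y // withExtra c τ y = τ'} :=
  fun x => ⟨Sum.map id some x.1, by rcases x with ⟨s | t, hx⟩ <;> exact hx⟩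

theorem withExtraEmb_injective (c : Conf C k TS TE) (τ τ' : Typ C k) :
    Function.Injective (withExtraEmb c τ τ') := fun _ _ hxy =>
  Subtype.ext <| Sum.map_injective.2 ⟨Function.injective_id, Option.some_injective _⟩
    (congrArg Subtype.val hxy)

theorem card_le_card_withExtra [Finite TS] [Finite TE] (c : Conf C k TS TE) (τ τ' : Typ C k) :
    Nat.card {x // c x = τ'} ≤ Nat.card {y // withExtra c τ y = τ'} :=
  Nat.card_le_card_of_injective _ (withExtraEmb_injective c τ τ')

theorem card_withExtra_of_ne (c : Conf C k TS TE) {τ τ' : Typ C k} (hne : τ' ≠ τ) :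
    Nat.card {y // withExtra c τ y = τ'} = Nat.card {x // c x = τ'} := by
  refine (Nat.card_eq_of_bijective _ ⟨withExtraEmb_injective c τ τ', ?_⟩).symm
  rintro ⟨s | _ | t, hy⟩
  · exact ⟨⟨.inl s, hy⟩, rfl⟩
  · exact absurd hy.symm hne
  · exact ⟨⟨.inr t, hy⟩, rfl⟩

theorem CfgMatches.of_withExtra [Finite TS] [Finite TE] {c : Typ C k → ℕ}
    {cfg : Conf C k TS TE} {τ : Typ C k}
    (hM : CfgMatches c (withExtra cfg τ)) (hcrowd : k ≤ Nat.card {x // cfg x = τ}) :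
    CfgMatches c cfg := by
  intro τ'
  by_cases hτ : τ' = τ
  · subst hτ
    refine ⟨fun hc => ?_, fun _ => hcrowd⟩
    have := (hM τ').1 hc
    have := card_le_card_withExtra cfg τ' τ'
    omega
  · simpa only [card_withExtra_of_ne cfg hτ] using hM τ'

end Count

section Crowd

variable {C : Type} {k : ℕ} {TS TE : Type}

theorem isChain_map_playHist {conf : ℕ → Conf C k TS TE}
    (hstep : ∀ n x, typLe (conf n x) (conf (n + 1) x)) (n : ℕ) (x : TS ⊕ TE) :
    ((playHist conf n).map (· x)).IsChain typLe :=
  List.isChain_iff_getElem.2 fun i hi => by simpa using hstep i x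

theorem demand_le_followers [Finite TE] {conf : ℕ → Conf C k TS TE}
    (hinit : ∀ x, conf 0 x = initTyp C k) (hTE : demand C k 1 ≤ Nat.card TE) (n : ℕ) :
    demand C k (extraPath (playHist conf (n + 1))).length ≤
      followers (playHist conf (n + 1)) (extraPath (playHist conf (n + 1))) := by
  induction n with
  | zero =>
    have hall : ∀ t, [initTyp C k] <+: trajectory [conf 0] t := fun t => by
      simp [trajectory, hinit]
    simpa [playHist, extraPath_singleton, followers, Nat.card_congr (Equiv.subtypeUnivEquiv hall)]
      using hTE
  | succ n ih =>
    rw [playHist_succ conf (n + 1), extraPath_append_singleton]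
    rcases advance_eq_or (playHist conf (n + 1) ++ [conf (n + 1)])
      (extraPath (playHist conf (n + 1))) with heq | ⟨τ, hτ, heq⟩
    · rw [heq]
      exact ih.trans (followers_le_followers_append _ _ _)
    · simpa [heq] using hτ.2.2

/-- The followers of `p` that went further split into at most `M` groups by their next type,
each smaller than the demand. -/
theorem demand_le_card_trajectory_eq [Finite C] [Finite TE] {h : List (Conf C k TS TE)}
    {p : List (Typ C k)} (hk : 0 < k) (hp : p ≠ []) (hlen : p.length ≤ Nat.card (Typ C k))
    (hchain : ∀ t, (h.map (· (.inr t))).IsChain typLe)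
    (hdemand : demand C k p.length ≤ followers h p) (heven : Even h.length)
    (hstuck : ∀ τ, ¬CanAdvance h p τ) :
    demand C k (p.length + 1) ≤ Nat.card {t // trajectory h t = p} := by
  refine List.le_card_eq_of_card_prefix _ p (le_of_eq_of_le ?_ hdemand) fun τ => ?_
  · rw [demand, demand, show Nat.card (Typ C k) + 1 - p.length =
      Nat.card (Typ C k) + 1 - (p.length + 1) + 1 by omega, pow_succ]
    ring
  · by_contra hge
    have hpos : 0 < demand C k (p.length + 1) := Nat.mul_pos hk (Nat.pow_pos (Nat.succ_pos _))
    obtain ⟨⟨t, ht⟩⟩ := (Nat.card_pos_iff.1 (hpos.trans_le (not_lt.1 hge))).1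
    have hstep := List.isChain_append.1 (((hchain t).destutter_ne).prefix ht)
    exact hstuck τ
      ⟨heven, hstep.2.2 _ (List.getLast?_eq_some_getLastD hp _) τ rfl, not_lt.1 hge⟩

theorem extraPath_playHist_eq_of_stable {conf : ℕ → Conf C k TS TE} {N : ℕ}
    (hstab : ∀ n, N ≤ n → liftPlay conf n = liftPlay conf N) (n : ℕ) (hn : N ≤ n) :
    extraPath (playHist conf (n + 1)) = extraPath (playHist conf (N + 1)) := by
  have hpos (m : ℕ) (hm : N ≤ m) :
      extraPos (playHist conf (m + 1)) = extraPos (playHist conf (N + 1)) :=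
    congrFun (hstab m hm) (.inr none)
  induction n, hn using Nat.le_induction with
  | base => rfl
  | succ n hn ih =>
    rw [playHist_succ conf (n + 1), extraPath_append_singleton_of_extraPos_eq, ih]
    rw [← playHist_succ, hpos _ (by omega), hpos n hn]

theorem le_card_extraPos_of_stable [Finite C] [Finite TS] [Finite TE]
    {conf : ℕ → Conf C k TS TE} (hplay : IsPlay conf) (hk : 0 < k)
    (hTE : demand C k 1 ≤ Nat.card TE)
    (hlen : ∀ h : List (Conf C k TS TE), (extraPath h).length ≤ Nat.card (Typ C k)) {N : ℕ}
    (hstab : ∀ n, N ≤ n → liftPlay conf n = liftPlay conf N) :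
    k ≤ Nat.card {x // conf N x = extraPos (playHist conf (N + 1))} := by
  have hpath := extraPath_playHist_eq_of_stable hstab
  have hstuck := advance_eq_self_iff.1 <| by
    have := hpath (2 * N + 1) (by omega)
    rwa [playHist_succ conf (2 * N + 1), extraPath_append_singleton, ← playHist_succ,
      hpath (2 * N) (by omega)] at this
  have hcrowd := demand_le_card_trajectory_eq hk (extraPath_ne_nil _) (hlen _)
    (fun t => isChain_map_playHist hplay.2.1 _ _)
    (hpath (2 * N + 1) (by omega) ▸ demand_le_followers hplay.1 hTE _) (by simp [parity_simps])
    (not_exists.1 hstuck)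
  have hat (t : TE) (ht : trajectory (playHist conf (2 * N + 1 + 1)) t =
      extraPath (playHist conf (N + 1))) :
      conf N (.inr t) = extraPos (playHist conf (N + 1)) := by
    have hlast := congrArg List.getLast? ht
    rw [trajectory, List.getLast?_destutter_ne, playHist_succ, List.map_append,
      List.map_singleton, List.getLast?_concat,
      List.getLast?_eq_some_getLastD (extraPath_ne_nil _) (initTyp C k)] at hlast
    exact (congrFun (hstab _ (by omega)) (.inr (some t))).symm.trans
      (Option.some_injective _ hlast)
  calc k ≤ demand C k ((extraPath (playHist conf (N + 1))).length + 1) :=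
        Nat.le_mul_of_pos_right k (Nat.pow_pos (Nat.succ_pos _))
    _ ≤ _ := hcrowd
    _ ≤ Nat.card {x // conf N x = extraPos (playHist conf (N + 1))} :=
      Nat.card_le_card_of_injective (fun t => ⟨.inr t.1, hat t.1 t.2⟩)
        fun _ _ hst => Subtype.ext (Sum.inr_injective (congrArg Subtype.val hst))

end Crowd

theorem tokWinning_liftHist {A B : Type} [Finite A] [Finite B] {k : ℕ} {TS TE : Type} [Finite TS]
    [Finite TE] {φ : PDW A B 0 0 0} {σ : TokStrat (A ⊕ B) k TS (Option TE)}
    (hσ : StratLegal σ) (hwin : TokWinning φ σ) (hTE : demand (A ⊕ B) k 1 ≤ Nat.card TE) :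
    TokWinning φ fun h => σ (liftHist h) := by
  intro conf hplay hcompat
  obtain ⟨N, hstab, c, hacc, hmatch⟩ :=
    hwin _ (isPlay_liftPlay hplay) (compatibleTok_liftPlay hcompat)
  have hconf (n : ℕ) (hn : N ≤ n) : conf n = conf N := funext fun x => by
    rcases x with s | t
    · exact congrFun (hstab n hn) (.inl s)
    · exact congrFun (hstab n hn) (.inr (some t))
  refine ⟨N, hconf, c, hacc, hmatch.of_withExtra ?_⟩
  rcases Nat.eq_zero_or_pos k with rfl | hk
  · exact Nat.zero_le _
  refine le_card_extraPos_of_stable hplay hk hTE (fun h => ?_) hstab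
  exact (hwin.nodup_of_isChain hσ (isChain_extraPath h) (head?_extraPath h)).length_le_natCard

/-- Environment cutoff: for every `k` there exists `f_E` such
that for every `nS`, every `nE ≥ f_E` and every prefFO^dw sentence `φ` of
quantifier depth `k`, if `(nS, nE + 1)` is winning for System in the token game
for `φ`, then so is `(nS, nE)`. -/
theorem environment_cutoff {A B : Type} [Finite A] [Finite B] (k : ℕ) :
    ∃ fE : ℕ, ∀ nS nE : ℕ, fE ≤ nE → ∀ φ : PDW A B 0 0 0, PDW.depth φ = k →
      SystemWinsTok A B k φ nS (nE + 1) → SystemWinsTok A B k φ nS nE := by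
  refine ⟨k * (Nat.card (Typ (A ⊕ B) k) + 1) ^ Nat.card (Typ (A ⊕ B) k),
    fun nS nE hnE φ _ hwin TS TE _ _ hTS hTE => ?_⟩
  obtain ⟨σ, hσ, hσwin⟩ := hwin TS (Option TE) inferInstance inferInstance hTS
    (by rw [Finite.card_option, hTE])
  exact ⟨_, stratLegal_liftHist hσ,
    tokWinning_liftHist hσ hσwin (by simpa [demand, hTE] using hnE)⟩

end PrefSynth
end
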